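/- Product beta and surjective pairing hold realisably: for effective sets A, B, with p_1, p_2, cons the extensions of the low-level projections and pairing, one has ⊨ ∀u ∈ El(A), v ∈ El(B), |p_1(⟨u,v⟩) =_{El(A)} u| and |p_2(⟨u,v⟩) =_{El(B)} v|, and ⊨ ∀w, w' ∈ El(A×B), |p_1(w) =_{El(A)} p_1(w')| ⇒ |p_2(w) =_{El(B)} p_2(w')| ⇒ |w =_{El(A×B)} w'|. -/

import Mathlib

open Nat.Partrec (Code)

/-- `φ_e(n)` : evaluation of the `e`-th partial recursive function. -/
def Phi (e n : ℕ) : Part ℕ := (Denumerable.ofNat Code e).eval n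

/-- Realisability implication. -/
def rImp (F G : Set ℕ) : Set ℕ := {e | ∀ n ∈ F, ∃ m ∈ G, m ∈ Phi e n}

/-- Realisability conjunction via pairing. -/
def rAnd (F G : Set ℕ) : Set ℕ := {k | ∃ n ∈ F, ∃ m ∈ G, k = Nat.pair n m}

/-- Realisability bi-implication. -/
def rIff (F G : Set ℕ) : Set ℕ := rAnd (rImp F G) (rImp G F)

/-- Realisability universal quantification (intersection). -/
def rAll {X : Type} (H : X → Set ℕ) : Set ℕ := ⋂ x, H x

/-- Realisability existential quantification (union). -/
def rEx {X : Type} (H : X → Set ℕ) : Set ℕ := ⋃ x, H x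

/-- Realisability symmetry of a relation. -/
def IsSymm' {X : Type} (eqX : X → X → Set ℕ) : Prop :=
  (rAll fun x => rAll fun y => rImp (eqX x y) (eqX y x)).Nonempty

/-- Realisability transitivity of a relation. -/
def IsTrans' {X : Type} (eqX : X → X → Set ℕ) : Prop :=
  (rAll fun x => rAll fun y => rAll fun z =>
    rImp (eqX x y) (rImp (eqX y z) (eqX x z))).Nonempty

/-- `eqX` makes its carrier an effective set. -/
def IsEff {X : Type} (eqX : X → X → Set ℕ) : Prop := IsSymm' eqX ∧ IsTrans' eqX

/-- Equality of `El(X)` : stability ∧ unicity ∧ existence ∧ equivalence. -/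
def elEq {X : Type} (eqX : X → X → Set ℕ) (u v : X → Set ℕ) : Set ℕ :=
  rAnd (rAll fun x => rAll fun x' => rImp (u x) (rImp (eqX x x') (u x')))
    (rAnd (rAll fun x => rAll fun x' => rImp (u x) (rImp (u x') (eqX x x')))
      (rAnd (rEx fun x => u x)
        (rAll fun x => rIff (u x) (v x))))

/-- Injection from the low level to the high level. -/
def el {X : Type} (eqX : X → X → Set ℕ) (x : X) : X → Set ℕ := fun y => eqX x y

/-- Equality of the product effective set. -/
def prodEq {A B : Type} (eqA : A → A → Set ℕ) (eqB : B → B → Set ℕ) :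
    A × B → A × B → Set ℕ :=
  fun c c' => rAnd (eqA c.1 c'.1) (eqB c.2 c'.2)


open Nat.Partrec.Code Encodable Denumerable

/-! ### Basic facts -/

theorem Phi_encode (c : Code) (n : ℕ) : Phi (encode c) n = c.eval n := by
  simp [Phi]

theorem phi_partrec : Partrec₂ Phi :=
  (Nat.Partrec.Code.eval_part).comp ((Computable.ofNat Code).comp Computable.fst)
    Computable.snd

theorem mem_rImp_iff {e : ℕ} {F G : Set ℕ} :
    e ∈ rImp F G ↔ ∀ n ∈ F, ∃ m ∈ G, m ∈ Phi e n := Iff.rfl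

theorem mem_rAll_iff {X : Type} {H : X → Set ℕ} {e : ℕ} :
    e ∈ rAll H ↔ ∀ x, e ∈ H x := Set.mem_iInter

theorem rAnd_pair_mem {F G : Set ℕ} {n m : ℕ} (hn : n ∈ F) (hm : m ∈ G) :
    Nat.pair n m ∈ rAnd F G := ⟨n, hn, m, hm, rfl⟩

theorem rAnd_dest {F G : Set ℕ} {k : ℕ} (h : k ∈ rAnd F G) :
    k.unpair.1 ∈ F ∧ k.unpair.2 ∈ G := by
  obtain ⟨n, hn, m, hm, rfl⟩ := h
  simpa using ⟨hn, hm⟩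

/-! ### Components of an `elEq` realizer -/

/-- stability component -/
def cS (q : ℕ) : ℕ := q.unpair.1
/-- unicity component -/
def cU (q : ℕ) : ℕ := q.unpair.2.unpair.1
/-- existence component -/
def cE (q : ℕ) : ℕ := q.unpair.2.unpair.2.unpair.1
/-- forward iff component -/
def cF (q : ℕ) : ℕ := q.unpair.2.unpair.2.unpair.2.unpair.1
/-- backward iff component -/
def cB (q : ℕ) : ℕ := q.unpair.2.unpair.2.unpair.2.unpair.2

theorem elEq_dest {X : Type} {eqX : X → X → Set ℕ} {u v : X → Set ℕ} {q : ℕ}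
    (hq : q ∈ elEq eqX u v) :
    (∀ x x', cS q ∈ rImp (u x) (rImp (eqX x x') (u x'))) ∧
    (∀ x x', cU q ∈ rImp (u x) (rImp (u x') (eqX x x'))) ∧
    (∃ x, cE q ∈ u x) ∧
    (∀ x, cF q ∈ rImp (u x) (v x) ∧ cB q ∈ rImp (v x) (u x)) := by
  obtain ⟨s, hs, k, ⟨un, hun, k2, ⟨ex, hex, ff, hff, rfl⟩, rfl⟩, rfl⟩ := hq
  simp only [cS, cU, cE, cF, cB, Nat.unpair_pair]
  rw [mem_rAll_iff] at hs hun
  refine ⟨fun x x' => (mem_rAll_iff.1 (hs x)) x',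
    fun x x' => (mem_rAll_iff.1 (hun x)) x', Set.mem_iUnion.1 hex, fun x => ?_⟩
  have hx := mem_rAll_iff.1 hff x
  obtain ⟨f, hf, b, hb, hfb⟩ := hx
  rw [hfb]
  simpa using ⟨hf, hb⟩

theorem elEq_intro {X : Type} {eqX : X → X → Set ℕ} {u v : X → Set ℕ}
    {s un ex f b : ℕ}
    (h1 : ∀ x x', s ∈ rImp (u x) (rImp (eqX x x') (u x')))
    (h2 : ∀ x x', un ∈ rImp (u x) (rImp (u x') (eqX x x')))
    (h3 : ∃ x, ex ∈ u x)
    (h4 : ∀ x, f ∈ rImp (u x) (v x)) (h5 : ∀ x, b ∈ rImp (v x) (u x)) :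
    Nat.pair s (Nat.pair un (Nat.pair ex (Nat.pair f b))) ∈ elEq eqX u v := by
  refine ⟨s, ?_, _, ⟨un, ?_, _, ⟨ex, Set.mem_iUnion.2 h3, Nat.pair f b, ?_, rfl⟩, rfl⟩, rfl⟩
  · exact mem_rAll_iff.2 fun x => mem_rAll_iff.2 fun x' => h1 x x'
  · exact mem_rAll_iff.2 fun x => mem_rAll_iff.2 fun x' => h2 x x'
  · exact mem_rAll_iff.2 fun x => ⟨f, h4 x, b, h5 x, rfl⟩

/-! ### Building realizers from partial recursive functions -/

theorem forces1 {ι : Sort*} {F G : ι → Set ℕ} {f : ℕ →. ℕ} (hf : Partrec f)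
    (h : ∀ i, ∀ n ∈ F i, ∃ m ∈ G i, m ∈ f n) :
    ∃ e, ∀ i, e ∈ rImp (F i) (G i) := by
  obtain ⟨c, hc⟩ := Nat.Partrec.Code.exists_code.1 (Partrec.nat_iff.1 hf)
  refine ⟨encode c, fun i n hn => ?_⟩
  rw [Phi_encode, hc]
  exact h i n hn

theorem forces2 {ι : Sort*} {F G H : ι → Set ℕ} {f : ℕ → ℕ →. ℕ}
    (hf : Partrec fun p : ℕ => f p.unpair.1 p.unpair.2)
    (h : ∀ i, ∀ n ∈ F i, ∀ k ∈ G i, ∃ m ∈ H i, m ∈ f n k) :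
    ∃ e, ∀ i, e ∈ rImp (F i) (rImp (G i) (H i)) := by
  obtain ⟨c, hc⟩ := Nat.Partrec.Code.exists_code.1 (Partrec.nat_iff.1 hf)
  have hcomp : Computable fun n : ℕ => encode (c.curry n) :=
    (Primrec.encode.comp (Nat.Partrec.Code.primrec₂_curry.comp (Primrec.const c) Primrec.id)).to_comp
  refine forces1 hcomp.partrec fun i n hn => ⟨encode (c.curry n), fun k hk => ?_, by simp⟩
  obtain ⟨m, hmH, hm⟩ := h i n hn k hk
  exact ⟨m, hmH, by rw [Phi_encode, eval_curry, hc]; simpa using hm⟩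

theorem forces3 {ι : Sort*} {F G H K : ι → Set ℕ} {f : ℕ → ℕ → ℕ →. ℕ}
    (hf : Partrec fun p : ℕ => f p.unpair.1 p.unpair.2.unpair.1 p.unpair.2.unpair.2)
    (h : ∀ i, ∀ n ∈ F i, ∀ k ∈ G i, ∀ l ∈ H i, ∃ m ∈ K i, m ∈ f n k l) :
    ∃ e, ∀ i, e ∈ rImp (F i) (rImp (G i) (rImp (H i) (K i))) := by
  obtain ⟨c, hc⟩ := Nat.Partrec.Code.exists_code.1 (Partrec.nat_iff.1 hf)
  have hcomp : Computable fun p : ℕ =>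
      (encode ((c.curry p.unpair.1).curry p.unpair.2) : ℕ) := by
    have h1 : Primrec fun p : ℕ => p.unpair.1 := Primrec.fst.comp Primrec.unpair
    have h2 : Primrec fun p : ℕ => p.unpair.2 := Primrec.snd.comp Primrec.unpair
    exact (Primrec.encode.comp
      (Nat.Partrec.Code.primrec₂_curry.comp (Nat.Partrec.Code.primrec₂_curry.comp (Primrec.const c) h1) h2)).to_comp
  apply forces2 (f := fun n k => Part.some (encode ((c.curry n).curry k)))
    (by
      apply Computable.partrec
      exact hcomp)
  intro i n hn k hk
  refine ⟨encode ((c.curry n).curry k), fun l hl => ?_, by simp⟩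
  obtain ⟨m, hmK, hm⟩ := h i n hn k hk l hl
  refine ⟨m, hmK, ?_⟩
  rw [Phi_encode, eval_curry, eval_curry, hc]
  simpa using hm

theorem forces4 {ι : Sort*} {F G H K L : ι → Set ℕ} {f : ℕ → ℕ → ℕ → ℕ →. ℕ}
    (hf : Partrec fun p : ℕ => f p.unpair.1 p.unpair.2.unpair.1
      p.unpair.2.unpair.2.unpair.1 p.unpair.2.unpair.2.unpair.2)
    (h : ∀ i, ∀ n ∈ F i, ∀ k ∈ G i, ∀ l ∈ H i, ∀ r ∈ K i, ∃ m ∈ L i, m ∈ f n k l r) :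
    ∃ e, ∀ i, e ∈ rImp (F i) (rImp (G i) (rImp (H i) (rImp (K i) (L i)))) := by
  obtain ⟨c, hc⟩ := Nat.Partrec.Code.exists_code.1 (Partrec.nat_iff.1 hf)
  have h1 : Primrec fun p : ℕ => p.unpair.1 := Primrec.fst.comp Primrec.unpair
  have h2 : Primrec fun p : ℕ => p.unpair.2 := Primrec.snd.comp Primrec.unpair
  have hcomp : Computable fun p : ℕ =>
      (encode (((c.curry p.unpair.1).curry p.unpair.2.unpair.1).curry
        p.unpair.2.unpair.2) : ℕ) :=
    (Primrec.encode.comp (Nat.Partrec.Code.primrec₂_curry.comp (Nat.Partrec.Code.primrec₂_curry.comp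
      (Nat.Partrec.Code.primrec₂_curry.comp (Primrec.const c) h1) (h1.comp h2)) (h2.comp h2))).to_comp
  apply forces3 (f := fun n k l =>
    Part.some (encode (((c.curry n).curry k).curry l))) (Computable.partrec hcomp)
  intro i n hn k hk l hl
  refine ⟨encode (((c.curry n).curry k).curry l), fun r hr => ?_, by simp⟩
  obtain ⟨m, hmL, hm⟩ := h i n hn k hk l hl r hr
  refine ⟨m, hmL, ?_⟩
  rw [Phi_encode, eval_curry, eval_curry, eval_curry, hc]
  simpa using hm

/-! ### Numeral-level code combinators -/

/-- a number coding `Phi b ∘ Phi a` -/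
def compc (a b : ℕ) : ℕ := encode (Code.comp (ofNat Code b) (ofNat Code a))

theorem Phi_compc (a b n : ℕ) : Phi (compc a b) n = (Phi a n).bind (Phi b) := by
  simp only [Phi, compc, Denumerable.ofNat_encode, Nat.Partrec.Code.eval]
  rfl

theorem compc_mem {F G H : Set ℕ} {a b : ℕ} (ha : a ∈ rImp F G) (hb : b ∈ rImp G H) :
    compc a b ∈ rImp F H := by
  intro n hn
  obtain ⟨m, hmG, hm⟩ := ha n hn
  obtain ⟨r, hrH, hr⟩ := hb m hmG
  exact ⟨r, hrH, by rw [Phi_compc]; exact Part.mem_bind hm hr⟩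

theorem compc_primrec : Primrec₂ compc :=
  Primrec.encode.comp₂ (Nat.Partrec.Code.primrec₂_comp.comp₂
    ((Primrec.ofNat Code).comp₂ Primrec₂.right)
    ((Primrec.ofNat Code).comp₂ Primrec₂.left))

/-- a number coding `n ↦ pair (Phi a n) (Phi b n)` -/
def pairc (a b : ℕ) : ℕ := encode (Code.pair (ofNat Code a) (ofNat Code b))

theorem Phi_pairc_mem {a b n x y : ℕ} (hx : x ∈ Phi a n) (hy : y ∈ Phi b n) :
    Nat.pair x y ∈ Phi (pairc a b) n := by
  have : Phi (pairc a b) n = Nat.pair <$> Phi a n <*> Phi b n := by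
    simp only [Phi, pairc, Denumerable.ofNat_encode, Nat.Partrec.Code.eval]
  rw [this, Seq.seq]
  exact Part.mem_bind (Part.mem_map _ hx) (Part.mem_map _ hy)

theorem pairc_mem {F G H : Set ℕ} {a b : ℕ} (ha : a ∈ rImp F G) (hb : b ∈ rImp F H) :
    pairc a b ∈ rImp F (rAnd G H) := by
  intro n hn
  obtain ⟨x, hxG, hx⟩ := ha n hn
  obtain ⟨y, hyH, hy⟩ := hb n hn
  exact ⟨Nat.pair x y, rAnd_pair_mem hxG hyH, Phi_pairc_mem hx hy⟩

theorem pairc_primrec : Primrec₂ pairc :=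
  Primrec.encode.comp₂ (Nat.Partrec.Code.primrec₂_pair.comp₂
    ((Primrec.ofNat Code).comp₂ Primrec₂.left)
    ((Primrec.ofNat Code).comp₂ Primrec₂.right))

/-- right-composition gadget: `rc f` is a code with `Phi (rc f) m = some (compc m f)`. -/
theorem exists_rc : ∃ rc : ℕ → ℕ, Computable rc ∧
    ∀ f m, Phi (rc f) m = Part.some (compc m f) := by
  have hcomp : Computable fun p : ℕ => (compc p.unpair.2 p.unpair.1 : ℕ) :=
    (compc_primrec.comp (Primrec.snd.comp Primrec.unpair)
      (Primrec.fst.comp Primrec.unpair)).to_comp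
  obtain ⟨c, hc⟩ := Nat.Partrec.Code.exists_code.1
    (Partrec.nat_iff.1 hcomp.partrec)
  refine ⟨fun f => encode (c.curry f),
    (Primrec.encode.comp (Nat.Partrec.Code.primrec₂_curry.comp (Primrec.const c) Primrec.id)).to_comp,
    fun f m => ?_⟩
  rw [Phi_encode, eval_curry, hc]
  simp

/-- left-composition gadget: `lc b` is a code with `Phi (lc b) m = some (compc b m)`. -/
theorem exists_lc : ∃ lc : ℕ → ℕ, Computable lc ∧
    ∀ b m, Phi (lc b) m = Part.some (compc b m) := by
  have hcomp : Computable fun p : ℕ => (compc p.unpair.1 p.unpair.2 : ℕ) :=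
    (compc_primrec.comp (Primrec.fst.comp Primrec.unpair)
      (Primrec.snd.comp Primrec.unpair)).to_comp
  obtain ⟨c, hc⟩ := Nat.Partrec.Code.exists_code.1
    (Partrec.nat_iff.1 hcomp.partrec)
  refine ⟨fun b => encode (c.curry b),
    (Primrec.encode.comp (Nat.Partrec.Code.primrec₂_curry.comp (Primrec.const c) Primrec.id)).to_comp,
    fun b m => ?_⟩
  rw [Phi_encode, eval_curry, hc]
  simp

/-! ### Computability helper combinators -/

theorem cmpU1 {α : Type} [Primcodable α] {f : α → ℕ} (hf : Computable f) :
    Computable fun a => (f a).unpair.1 :=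
  (Primrec.fst.comp Primrec.unpair).to_comp.comp hf

theorem cmpU2 {α : Type} [Primcodable α] {f : α → ℕ} (hf : Computable f) :
    Computable fun a => (f a).unpair.2 :=
  (Primrec.snd.comp Primrec.unpair).to_comp.comp hf

theorem cmpPair {α : Type} [Primcodable α] {f g : α → ℕ} (hf : Computable f)
    (hg : Computable g) : Computable fun a => Nat.pair (f a) (g a) :=
  Primrec₂.natPair.to_comp.comp hf hg

theorem cmpCompc {α : Type} [Primcodable α] {f g : α → ℕ} (hf : Computable f)
    (hg : Computable g) : Computable fun a => compc (f a) (g a) :=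
  compc_primrec.to_comp.comp hf hg

theorem cmpPairc {α : Type} [Primcodable α] {f g : α → ℕ} (hf : Computable f)
    (hg : Computable g) : Computable fun a => pairc (f a) (g a) :=
  pairc_primrec.to_comp.comp hf hg

/-! ### Straight-line program machinery -/

/-- binary application -/
def ap2 (c x y : ℕ) : Part ℕ := (Phi c x).bind fun m => Phi m y

theorem ap2_spec {c x y : ℕ} {F G H : Set ℕ} (hc : c ∈ rImp F (rImp G H))
    (hx : x ∈ F) (hy : y ∈ G) : ∃ m ∈ H, m ∈ ap2 c x y := by
  obtain ⟨m, hm, hmem⟩ := hc x hx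
  obtain ⟨r, hr, hrmem⟩ := hm y hy
  exact ⟨r, hr, Part.mem_bind hmem hrmem⟩

/-- step: apply `Phi` and push the result on the environment -/
def stp1 (a b : ℕ → ℕ) : ℕ →. ℕ := fun e => (Phi (a e) (b e)).map (Nat.pair e)

/-- step: binary-apply and push the result on the environment -/
def stp2 (a b d : ℕ → ℕ) : ℕ →. ℕ := fun e => (ap2 (a e) (b e) (d e)).map (Nat.pair e)

theorem stp1_partrec {a b : ℕ → ℕ} (ha : Computable a) (hb : Computable b) :
    Partrec (stp1 a b) :=
  Partrec.map (phi_partrec.comp ha hb) Primrec₂.natPair.to_comp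

theorem stp2_partrec {a b d : ℕ → ℕ} (ha : Computable a) (hb : Computable b)
    (hd : Computable d) : Partrec (stp2 a b d) :=
  Partrec.map ((phi_partrec.comp ha hb).bind
    (phi_partrec.comp Computable.snd (hd.comp Computable.fst)))
    Primrec₂.natPair.to_comp

theorem chain_partrec {f g : ℕ →. ℕ} (hf : Partrec f) (hg : Partrec g) :
    Partrec fun n => (f n).bind g :=
  hf.bind (hg.comp Computable.snd)

theorem stp1_mem {a b : ℕ → ℕ} {e v : ℕ} (h : v ∈ Phi (a e) (b e)) :
    Nat.pair e v ∈ stp1 a b e := Part.mem_map _ h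

theorem stp2_mem {a b d : ℕ → ℕ} {e v : ℕ} (h : v ∈ ap2 (a e) (b e) (d e)) :
    Nat.pair e v ∈ stp2 a b d e := Part.mem_map _ h

/-! ### Transitivity of `elEq` -/

theorem elEq_trans {X : Type} (eqX : X → X → Set ℕ) :
    ∃ tE : ℕ, ∀ w w₁ w₂ : X → Set ℕ,
      tE ∈ rImp (elEq eqX w w₁) (rImp (elEq eqX w₁ w₂) (elEq eqX w w₂)) := by
  have := forces2 (ι := (X → Set ℕ) × (X → Set ℕ) × (X → Set ℕ))
    (F := fun i => elEq eqX i.1 i.2.1) (G := fun i => elEq eqX i.2.1 i.2.2)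
    (H := fun i => elEq eqX i.1 i.2.2)
    (f := fun q1 q2 => Part.some (Nat.pair (cS q1) (Nat.pair (cU q1)
      (Nat.pair (cE q1) (Nat.pair (compc (cF q1) (cF q2)) (compc (cB q2) (cB q1)))))))
    ?_ ?_
  · obtain ⟨e, he⟩ := this
    exact ⟨e, fun w w₁ w₂ => he (w, w₁, w₂)⟩
  · apply Computable.partrec
    have u1 : Computable fun p : ℕ => p.unpair.1 := cmpU1 Computable.id
    have u2 : Computable fun p : ℕ => p.unpair.2 := cmpU2 Computable.id
    simp only [cS, cU, cE, cF, cB]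
    exact cmpPair (cmpU1 u1) (cmpPair (cmpU1 (cmpU2 u1))
      (cmpPair (cmpU1 (cmpU2 (cmpU2 u1)))
        (cmpPair (cmpCompc (cmpU1 (cmpU2 (cmpU2 (cmpU2 u1))))
            (cmpU1 (cmpU2 (cmpU2 (cmpU2 u2)))))
          (cmpCompc (cmpU2 (cmpU2 (cmpU2 (cmpU2 u2))))
            (cmpU2 (cmpU2 (cmpU2 (cmpU2 u1))))))))
  · rintro ⟨w, w₁, w₂⟩ q1 hq1 q2 hq2
    obtain ⟨hS1, hU1, hE1, hI1⟩ := elEq_dest hq1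
    obtain ⟨-, -, -, hI2⟩ := elEq_dest hq2
    refine ⟨_, ?_, Part.mem_some _⟩
    exact elEq_intro hS1 hU1 hE1
      (fun x => compc_mem (hI1 x).1 (hI2 x).1)
      (fun x => compc_mem (hI2 x).2 (hI1 x).2)

/-! ### Symmetry of `elEq` -/

theorem elEq_symm {X : Type} (eqX : X → X → Set ℕ) :
    ∃ sE : ℕ, ∀ w w' : X → Set ℕ,
      sE ∈ rImp (elEq eqX w w') (elEq eqX w' w) := by
  obtain ⟨rc, hrc_comp, hrc⟩ := exists_rc
  obtain ⟨lc, hlc_comp, hlc⟩ := exists_lc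
  have := forces1 (ι := (X → Set ℕ) × (X → Set ℕ))
    (F := fun i => elEq eqX i.1 i.2) (G := fun i => elEq eqX i.2 i.1)
    (f := fun q => (Phi (cF q) (cE q)).map fun ex' =>
      Nat.pair (compc (cB q) (compc (cS q) (rc (cF q))))
        (Nat.pair (compc (cB q) (compc (cU q) (lc (cB q))))
          (Nat.pair ex' (Nat.pair (cB q) (cF q)))))
    ?_ ?_
  · obtain ⟨e, he⟩ := this
    exact ⟨e, fun w w' => he (w, w')⟩
  · have u1 : ∀ {α : Type} [Primcodable α] {f : α → ℕ},
        Computable f → Computable fun a => (f a).unpair.1 := fun hf => cmpU1 hf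
    simp only [cS, cU, cE, cF, cB]
    apply Partrec.map
    · exact phi_partrec.comp (cmpU1 (cmpU2 (cmpU2 (cmpU2 Computable.id))))
        (cmpU1 (cmpU2 (cmpU2 Computable.id)))
    · have hq : Computable fun p : ℕ × ℕ => p.1 := Computable.fst
      exact Computable₂.mk <| cmpPair
        (cmpCompc (cmpU2 (cmpU2 (cmpU2 (cmpU2 hq))))
          (cmpCompc (cmpU1 hq) (hrc_comp.comp (cmpU1 (cmpU2 (cmpU2 (cmpU2 hq)))))))
        (cmpPair
          (cmpCompc (cmpU2 (cmpU2 (cmpU2 (cmpU2 hq))))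
            (cmpCompc (cmpU1 (cmpU2 hq))
              (hlc_comp.comp (cmpU2 (cmpU2 (cmpU2 (cmpU2 hq)))))))
          (cmpPair Computable.snd
            (cmpPair (cmpU2 (cmpU2 (cmpU2 (cmpU2 hq))))
              (cmpU1 (cmpU2 (cmpU2 (cmpU2 hq)))))))
  · rintro ⟨w, w'⟩ q hq
    obtain ⟨hS, hU, ⟨x₀, hx₀⟩, hI⟩ := elEq_dest hq
    obtain ⟨ex', hex'W, hex'⟩ := (hI x₀).1 (cE q) hx₀
    refine ⟨_, ?_, Part.mem_map _ hex'⟩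
    refine elEq_intro ?_ ?_ ⟨x₀, hex'W⟩ (fun x => (hI x).2) (fun x => (hI x).1)
    · intro x x'
      refine compc_mem ((hI x).2) (compc_mem (hS x x') ?_)
      intro m hm
      exact ⟨compc m (cF q), compc_mem hm ((hI x').1),
        by rw [hrc]; exact Part.mem_some _⟩
    · intro x x'
      refine compc_mem ((hI x).2) (compc_mem (hU x x') ?_)
      intro m hm
      exact ⟨compc (cB q) m, compc_mem ((hI x').2) hm,
        by rw [hlc]; exact Part.mem_some _⟩

/-! ### `el` sends equal points to `elEq`-equal elements -/

theorem el_cong {X : Type} (eqX : X → X → Set ℕ) {s t : ℕ}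
    (hs : ∀ x y, s ∈ rImp (eqX x y) (eqX y x))
    (ht : ∀ x y z, t ∈ rImp (eqX x y) (rImp (eqX y z) (eqX x z))) :
    ∃ eL : ℕ, ∀ x x', eL ∈ rImp (eqX x x') (elEq eqX (el eqX x) (el eqX x')) := by
  classical
  set run : ℕ →. ℕ := fun e0 =>
    ((((stp1 (fun _ => s) (fun e => e.unpair.2) e0).bind
      (stp1 (fun _ => t) (fun e => e.unpair.1.unpair.2))).bind
      (stp1 (fun e => e.unpair.2) (fun e => e.unpair.1.unpair.2))).bind
      (stp1 (fun _ => t) (fun e => e.unpair.1.unpair.1.unpair.2))).map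
      (fun e => Nat.pair t (Nat.pair (compc s t) (Nat.pair e.unpair.1.unpair.2
        (Nat.pair e.unpair.2 e.unpair.1.unpair.1.unpair.2)))) with hrun
  have hrunp : Partrec run := by
    apply Partrec.map
    · apply chain_partrec (chain_partrec (chain_partrec ?_ ?_) ?_) ?_
      · exact stp1_partrec (Computable.const s) (cmpU2 Computable.id)
      · exact stp1_partrec (Computable.const t) (cmpU2 (cmpU1 Computable.id))
      · exact stp1_partrec (cmpU2 Computable.id) (cmpU2 (cmpU1 Computable.id))
      · exact stp1_partrec (Computable.const t) (cmpU2 (cmpU1 (cmpU1 Computable.id)))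
    · refine Computable₂.mk ?_
      have hq : Computable fun p : ℕ × ℕ => p.1 := Computable.fst
      exact cmpPair (Computable.const t) (cmpPair (Computable.const (compc s t))
        (cmpPair (cmpU2 (cmpU1 Computable.snd))
          (cmpPair (cmpU2 Computable.snd) (cmpU2 (cmpU1 (cmpU1 Computable.snd))))))
  have := forces1 (ι := X × X) (F := fun i => eqX i.1 i.2)
    (G := fun i => elEq eqX (el eqX i.1) (el eqX i.2))
    (f := fun k => run (Nat.pair 0 k))
    (hrunp.comp (cmpPair (Computable.const 0) Computable.id)) ?_
  · obtain ⟨e, he⟩ := this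
    exact ⟨e, fun x x' => he (x, x')⟩
  rintro ⟨x, x'⟩ k hk
  obtain ⟨sk, hsk, hskm⟩ := hs x x' k hk
  obtain ⟨m, _, hmm⟩ := ht x x' x k hk
  have hm_all : ∀ z, m ∈ rImp (eqX x' z) (eqX x z) := by
    intro z
    obtain ⟨m', hm', hmm'⟩ := ht x x' z k hk
    rwa [Part.mem_unique hmm hmm']
  obtain ⟨exx, hexx, hexxm⟩ := hm_all x sk hsk
  obtain ⟨m₁, _, hm₁m⟩ := ht x' x x' sk hsk
  have hm₁_all : ∀ z, m₁ ∈ rImp (eqX x z) (eqX x' z) := by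
    intro z
    obtain ⟨m₁', hm₁', hmm'⟩ := ht x' x z sk hsk
    rwa [Part.mem_unique hm₁m hmm']
  -- environments
  set e0 := Nat.pair 0 k
  set e1 := Nat.pair e0 sk
  set e2 := Nat.pair e1 m
  set e3 := Nat.pair e2 exx
  set e4 := Nat.pair e3 m₁
  have h1 : e1 ∈ stp1 (fun _ => s) (fun e => e.unpair.2) e0 :=
    stp1_mem (by simpa [e0] using hskm)
  have h2 : e2 ∈ stp1 (fun _ => t) (fun e => e.unpair.1.unpair.2) e1 :=
    stp1_mem (by simpa [e1, e0] using hmm)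
  have h3 : e3 ∈ stp1 (fun e => e.unpair.2) (fun e => e.unpair.1.unpair.2) e2 :=
    stp1_mem (by simpa [e2, e1] using hexxm)
  have h4 : e4 ∈ stp1 (fun _ => t) (fun e => e.unpair.1.unpair.1.unpair.2) e3 :=
    stp1_mem (by simpa [e3, e2, e1] using hm₁m)
  have hchain := Part.mem_bind (Part.mem_bind (Part.mem_bind h1 h2) h3) h4
  refine ⟨_, ?_, by simpa [hrun] using Part.mem_map _ hchain⟩
  have : Nat.pair t (Nat.pair (compc s t) (Nat.pair e4.unpair.1.unpair.2
      (Nat.pair e4.unpair.2 e4.unpair.1.unpair.1.unpair.2))) =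
      Nat.pair t (Nat.pair (compc s t) (Nat.pair exx (Nat.pair m₁ m))) := by
    simp [e4, e3, e2]
  rw [this]
  exact elEq_intro (fun y y' => ht x y y')
    (fun y y' => compc_mem (hs x y) (ht y x y'))
    ⟨x, hexx⟩ hm₁_all hm_all

/-! ### a singleton equals the `el` of its member -/

theorem el_sing {X : Type} (eqX : X → X → Set ℕ) :
    ∃ g : ℕ, ∀ (w : X → Set ℕ) (a : X),
      g ∈ rImp (elEq eqX w w) (rImp (w a) (elEq eqX w (el eqX a))) := by
  classical
  set run : ℕ →. ℕ := fun e0 =>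
    ((stp1 (fun e => cU e.unpair.1.unpair.2) (fun e => e.unpair.2) e0).bind
      (stp1 (fun e => cS e.unpair.1.unpair.1.unpair.2)
        (fun e => e.unpair.1.unpair.2))).map
      (fun e => Nat.pair (cS e.unpair.1.unpair.1.unpair.1.unpair.2)
        (Nat.pair (cU e.unpair.1.unpair.1.unpair.1.unpair.2)
          (Nat.pair (cE e.unpair.1.unpair.1.unpair.1.unpair.2)
            (Nat.pair e.unpair.1.unpair.2 e.unpair.2)))) with hrun
  have hrunp : Partrec run := by
    apply Partrec.map
    · have ha1 : Computable fun e : ℕ => cU e.unpair.1.unpair.2 := by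
        simp only [cU]
        exact cmpU1 (cmpU2 (cmpU2 (cmpU1 Computable.id)))
      have ha2 : Computable fun e : ℕ => cS e.unpair.1.unpair.1.unpair.2 := by
        simp only [cS]
        exact cmpU1 (cmpU2 (cmpU1 (cmpU1 Computable.id)))
      exact chain_partrec (stp1_partrec ha1 (cmpU2 Computable.id))
        (stp1_partrec ha2 (cmpU2 (cmpU1 Computable.id)))
    · refine Computable₂.mk ?_
      simp only [cS, cU, cE]
      have hb : Computable fun p : ℕ × ℕ => p.2.unpair.1.unpair.1.unpair.1.unpair.2 :=
        cmpU2 (cmpU1 (cmpU1 (cmpU1 Computable.snd)))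
      exact cmpPair (cmpU1 hb) (cmpPair (cmpU1 (cmpU2 hb))
        (cmpPair (cmpU1 (cmpU2 (cmpU2 hb)))
          (cmpPair (cmpU2 (cmpU1 Computable.snd)) (cmpU2 Computable.snd))))
  have := forces2 (ι := (X → Set ℕ) × X) (F := fun i => elEq eqX i.1 i.1)
    (G := fun i => i.1 i.2) (H := fun i => elEq eqX i.1 (el eqX i.2))
    (f := fun q r => run (Nat.pair (Nat.pair 0 q) r))
    (hrunp.comp (cmpPair (cmpPair (Computable.const 0) (cmpU1 Computable.id))
      (cmpU2 Computable.id))) ?_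
  · obtain ⟨e, he⟩ := this
    exact ⟨e, fun w a => he (w, a)⟩
  rintro ⟨w, a⟩ q hq r hr
  obtain ⟨hS, hU, hE, hI⟩ := elEq_dest hq
  obtain ⟨m, _, hmm⟩ := hU a a r hr
  have hm_all : ∀ x, m ∈ rImp (w x) (eqX a x) := by
    intro x
    obtain ⟨m', _, hmm'⟩ := hU a x r hr
    rwa [Part.mem_unique hmm hmm']
  obtain ⟨m', _, hm'm⟩ := hS a a r hr
  have hm'_all : ∀ x, m' ∈ rImp (eqX a x) (w x) := by
    intro x
    obtain ⟨m'', _, hmm''⟩ := hS a x r hr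
    rwa [Part.mem_unique hm'm hmm'']
  set e0 := Nat.pair (Nat.pair 0 q) r
  set e1 := Nat.pair e0 m
  set e2 := Nat.pair e1 m'
  have h1 : e1 ∈ stp1 (fun e => cU e.unpair.1.unpair.2) (fun e => e.unpair.2) e0 :=
    stp1_mem (by simpa [e0] using hmm)
  have h2 : e2 ∈ stp1 (fun e => cS e.unpair.1.unpair.1.unpair.2)
      (fun e => e.unpair.1.unpair.2) e1 :=
    stp1_mem (by simpa [e1, e0] using hm'm)
  have hchain := Part.mem_bind h1 h2
  refine ⟨_, ?_, by simpa [hrun] using Part.mem_map _ hchain⟩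
  have : Nat.pair (cS e2.unpair.1.unpair.1.unpair.1.unpair.2)
      (Nat.pair (cU e2.unpair.1.unpair.1.unpair.1.unpair.2)
        (Nat.pair (cE e2.unpair.1.unpair.1.unpair.1.unpair.2)
          (Nat.pair e2.unpair.1.unpair.2 e2.unpair.2))) =
      Nat.pair (cS q) (Nat.pair (cU q) (Nat.pair (cE q) (Nat.pair m m'))) := by
    simp [e2, e1, e0]
  rw [this]
  exact elEq_intro hS hU hE hm_all hm'_all

/-! ### `prodEq` is symmetric and transitive -/

theorem prod_symm {A B : Type} (eqA : A → A → Set ℕ) (eqB : B → B → Set ℕ)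
    {sA sB : ℕ} (hsA : ∀ x y, sA ∈ rImp (eqA x y) (eqA y x))
    (hsB : ∀ x y, sB ∈ rImp (eqB x y) (eqB y x)) :
    ∃ sP : ℕ, ∀ c c' : A × B,
      sP ∈ rImp (prodEq eqA eqB c c') (prodEq eqA eqB c' c) := by
  classical
  set run : ℕ →. ℕ := fun e0 =>
    ((stp1 (fun e => sA) (fun e => e.unpair.2.unpair.1) e0).bind
      (stp1 (fun e => sB) (fun e => e.unpair.1.unpair.2.unpair.2))).map
      (fun e => Nat.pair (e.unpair.1.unpair.2) (e.unpair.2)) with hrun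
  have hrunp : Partrec run := by
    exact Partrec.map (chain_partrec
      (stp1_partrec (Computable.const sA) (cmpU1 (cmpU2 (Computable.id))))
      (stp1_partrec (Computable.const sB) (cmpU2 (cmpU2 (cmpU1 (Computable.id))))))
      (Computable₂.mk (cmpPair (cmpU2 (cmpU1 (Computable.snd))) (cmpU2 (Computable.snd))))
  have := forces1 (ι := (A × B) × (A × B)) (F := fun i => prodEq eqA eqB i.1 i.2)
    (G := fun i => prodEq eqA eqB i.2 i.1)
    (f := fun k => run (Nat.pair 0 k))
    (hrunp.comp (cmpPair (Computable.const 0) Computable.id)) ?_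
  · obtain ⟨e, he⟩ := this
    exact ⟨e, fun c c' => he (c, c')⟩
  rintro ⟨c, c'⟩ k hk
  show ∃ m ∈ prodEq eqA eqB c' c, m ∈ run (Nat.pair 0 k)
  obtain ⟨hk1, hk2⟩ := rAnd_dest hk
  obtain ⟨x, hx, hxm⟩ := hsA c.1 c'.1 k.unpair.1 hk1
  obtain ⟨y, hy, hym⟩ := hsB c.2 c'.2 k.unpair.2 hk2
  set e0 := Nat.pair 0 k with he0
  set e1 := Nat.pair e0 x with he1
  set e2 := Nat.pair e1 y with he2
  have hs1 : e1 ∈ (stp1 (fun e => sA) (fun e => e.unpair.2.unpair.1)) e0 :=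
    stp1_mem (by simpa only [he0, Nat.unpair_pair] using hxm)
  have hs2 : e2 ∈ (stp1 (fun e => sB) (fun e => e.unpair.1.unpair.2.unpair.2)) e1 :=
    stp1_mem (by simpa only [he1, he0, Nat.unpair_pair] using hym)
  have hchain := Part.mem_bind hs1 hs2
  have hfin := Part.mem_map (fun e : ℕ => Nat.pair (e.unpair.1.unpair.2) (e.unpair.2)) hchain
  exact ⟨Nat.pair x y, rAnd_pair_mem hx hy,
    by simpa only [hrun, he2, he1, he0, Nat.unpair_pair] using hfin⟩

theorem prod_trans {A B : Type} (eqA : A → A → Set ℕ) (eqB : B → B → Set ℕ)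
    {tA tB : ℕ}
    (htA : ∀ x y z, tA ∈ rImp (eqA x y) (rImp (eqA y z) (eqA x z)))
    (htB : ∀ x y z, tB ∈ rImp (eqB x y) (rImp (eqB y z) (eqB x z))) :
    ∃ tP : ℕ, ∀ c c' c'' : A × B,
      tP ∈ rImp (prodEq eqA eqB c c')
        (rImp (prodEq eqA eqB c' c'') (prodEq eqA eqB c c'')) := by
  classical
  set run : ℕ →. ℕ := fun e0 =>
    ((((stp1 (fun e => tA) (fun e => e.unpair.1.unpair.2.unpair.1) e0).bind
      (stp1 (fun e => e.unpair.2) (fun e => e.unpair.1.unpair.2.unpair.1))).bind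
      (stp1 (fun e => tB) (fun e => e.unpair.1.unpair.1.unpair.1.unpair.2.unpair.2))).bind
      (stp1 (fun e => e.unpair.2) (fun e => e.unpair.1.unpair.1.unpair.1.unpair.2.unpair.2))).map
      (fun e => Nat.pair (e.unpair.1.unpair.1.unpair.2) (e.unpair.2)) with hrun
  have hrunp : Partrec run := by
    exact Partrec.map (chain_partrec (chain_partrec (chain_partrec
      (stp1_partrec (Computable.const tA) (cmpU1 (cmpU2 (cmpU1 (Computable.id)))))
      (stp1_partrec (cmpU2 (Computable.id)) (cmpU1 (cmpU2 (cmpU1 (Computable.id))))))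
      (stp1_partrec (Computable.const tB) (cmpU2 (cmpU2 (cmpU1 (cmpU1 (cmpU1 (Computable.id))))))))
      (stp1_partrec (cmpU2 (Computable.id)) (cmpU2 (cmpU2 (cmpU1 (cmpU1 (cmpU1 (Computable.id))))))))
      (Computable₂.mk (cmpPair (cmpU2 (cmpU1 (cmpU1 (Computable.snd)))) (cmpU2 (Computable.snd))))
  have := forces2 (ι := (A × B) × (A × B) × (A × B))
    (F := fun i => prodEq eqA eqB i.1 i.2.1) (G := fun i => prodEq eqA eqB i.2.1 i.2.2)
    (H := fun i => prodEq eqA eqB i.1 i.2.2)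
    (f := fun k k' => run (Nat.pair (Nat.pair 0 k) k'))
    (hrunp.comp (cmpPair (cmpPair (Computable.const 0) (cmpU1 Computable.id))
      (cmpU2 Computable.id))) ?_
  · obtain ⟨e, he⟩ := this
    exact ⟨e, fun c c' c'' => he (c, c', c'')⟩
  rintro ⟨c, c', c''⟩ k hk k' hk'
  show ∃ m ∈ prodEq eqA eqB c c'', m ∈ run (Nat.pair (Nat.pair 0 k) k')
  obtain ⟨hk1, hk2⟩ := rAnd_dest hk
  obtain ⟨hk'1, hk'2⟩ := rAnd_dest hk'
  obtain ⟨mA, hmA, hmAm⟩ := htA c.1 c'.1 c''.1 k.unpair.1 hk1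
  obtain ⟨x, hx, hxm⟩ := hmA k'.unpair.1 hk'1
  obtain ⟨mB, hmB, hmBm⟩ := htB c.2 c'.2 c''.2 k.unpair.2 hk2
  obtain ⟨y, hy, hym⟩ := hmB k'.unpair.2 hk'2
  set e0 := Nat.pair (Nat.pair 0 k) k' with he0
  set e1 := Nat.pair e0 mA with he1
  set e2 := Nat.pair e1 x with he2
  set e3 := Nat.pair e2 mB with he3
  set e4 := Nat.pair e3 y with he4
  have hs1 : e1 ∈ (stp1 (fun e => tA) (fun e => e.unpair.1.unpair.2.unpair.1)) e0 :=
    stp1_mem (by simpa only [he0, Nat.unpair_pair] using hmAm)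
  have hs2 : e2 ∈ (stp1 (fun e => e.unpair.2) (fun e => e.unpair.1.unpair.2.unpair.1)) e1 :=
    stp1_mem (by simpa only [he1, he0, Nat.unpair_pair] using hxm)
  have hs3 : e3 ∈ (stp1 (fun e => tB)
      (fun e => e.unpair.1.unpair.1.unpair.1.unpair.2.unpair.2)) e2 :=
    stp1_mem (by simpa only [he2, he1, he0, Nat.unpair_pair] using hmBm)
  have hs4 : e4 ∈ (stp1 (fun e => e.unpair.2)
      (fun e => e.unpair.1.unpair.1.unpair.1.unpair.2.unpair.2)) e3 :=
    stp1_mem (by simpa only [he3, he2, he1, he0, Nat.unpair_pair] using hym)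
  have hchain := Part.mem_bind (Part.mem_bind (Part.mem_bind hs1 hs2) hs3) hs4
  have hfin := Part.mem_map
    (fun e : ℕ => Nat.pair (e.unpair.1.unpair.1.unpair.2) (e.unpair.2)) hchain
  exact ⟨Nat.pair x y, rAnd_pair_mem hx hy,
    by simpa only [hrun, he4, he3, he2, he1, he0, Nat.unpair_pair] using hfin⟩

/-! ### Part 1: beta rule for the first projection -/

theorem beta_p1 {A B : Type} {eqA : A → A → Set ℕ} {eqB : B → B → Set ℕ}
    {p1 : (A × B → Set ℕ) → (A → Set ℕ)}
    {cons : (A → Set ℕ) → (B → Set ℕ) → (A × B → Set ℕ)}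
    {hc h1 h1e hce tEA tEP sEA singA singB : ℕ}
    (hhc : ∀ (u u' : A → Set ℕ) (v v' : B → Set ℕ), hc ∈ rImp (elEq eqA u u')
      (rImp (elEq eqB v v') (elEq (prodEq eqA eqB) (cons u v) (cons u' v'))))
    (hh1 : ∀ w w' : A × B → Set ℕ, h1 ∈ rImp (elEq (prodEq eqA eqB) w w')
      (elEq eqA (p1 w) (p1 w')))
    (hh1e : ∀ c : A × B, h1e ∈ rImp (prodEq eqA eqB c c)
      (elEq eqA (p1 (el (prodEq eqA eqB) c)) (el eqA c.1)))
    (hhce : ∀ (a : A) (b : B), hce ∈ rImp (eqA a a) (rImp (eqB b b)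
      (elEq (prodEq eqA eqB) (cons (el eqA a) (el eqB b)) (el (prodEq eqA eqB) (a, b)))))
    (htEA : ∀ w w₁ w₂ : A → Set ℕ, tEA ∈ rImp (elEq eqA w w₁)
      (rImp (elEq eqA w₁ w₂) (elEq eqA w w₂)))
    (htEP : ∀ w w₁ w₂ : A × B → Set ℕ, tEP ∈ rImp (elEq (prodEq eqA eqB) w w₁)
      (rImp (elEq (prodEq eqA eqB) w₁ w₂) (elEq (prodEq eqA eqB) w w₂)))
    (hsEA : ∀ w w' : A → Set ℕ, sEA ∈ rImp (elEq eqA w w') (elEq eqA w' w))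
    (hsingA : ∀ (w : A → Set ℕ) (a : A), singA ∈ rImp (elEq eqA w w)
      (rImp (w a) (elEq eqA w (el eqA a))))
    (hsingB : ∀ (w : B → Set ℕ) (b : B), singB ∈ rImp (elEq eqB w w)
      (rImp (w b) (elEq eqB w (el eqB b)))) :
    ∃ e : ℕ, ∀ (u : A → Set ℕ) (v : B → Set ℕ), e ∈ rImp (elEq eqA u u)
      (rImp (elEq eqB v v) (elEq eqA (p1 (cons u v)) u)) := by
  classical
  set run : ℕ →. ℕ := fun e0 =>
      ((((((((((((stp2 (fun e => e.unpair.1.unpair.2.unpair.2.unpair.1) (fun e => e.unpair.1.unpair.2.unpair.2.unpair.2.unpair.1) (fun e => e.unpair.1.unpair.2.unpair.2.unpair.2.unpair.1) e0).bind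
        (stp2 (fun e => e.unpair.1.unpair.2.unpair.2.unpair.1) (fun e => e.unpair.1.unpair.2.unpair.2.unpair.2.unpair.1) (fun e => e.unpair.1.unpair.2.unpair.2.unpair.2.unpair.1))).bind
        (stp2 (fun e => singA) (fun e => e.unpair.1.unpair.1.unpair.1.unpair.2) (fun e => e.unpair.1.unpair.1.unpair.1.unpair.2.unpair.2.unpair.2.unpair.1))).bind
        (stp2 (fun e => singB) (fun e => e.unpair.1.unpair.1.unpair.1.unpair.2) (fun e => e.unpair.1.unpair.1.unpair.1.unpair.2.unpair.2.unpair.2.unpair.1))).bind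
        (stp2 (fun e => hc) (fun e => e.unpair.1.unpair.2) (fun e => e.unpair.2))).bind
        (stp2 (fun e => hce) (fun e => e.unpair.1.unpair.1.unpair.1.unpair.1.unpair.2) (fun e => e.unpair.1.unpair.1.unpair.1.unpair.2))).bind
        (stp2 (fun e => tEP) (fun e => e.unpair.1.unpair.2) (fun e => e.unpair.2))).bind
        (stp1 (fun e => h1) (fun e => e.unpair.2))).bind
        (stp1 (fun e => h1e) (fun e => Nat.pair (e.unpair.1.unpair.1.unpair.1.unpair.1.unpair.1.unpair.1.unpair.1.unpair.2) (e.unpair.1.unpair.1.unpair.1.unpair.1.unpair.1.unpair.1.unpair.2)))).bind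
        (stp2 (fun e => tEA) (fun e => e.unpair.1.unpair.2) (fun e => e.unpair.2))).bind
        (stp1 (fun e => sEA) (fun e => e.unpair.1.unpair.1.unpair.1.unpair.1.unpair.1.unpair.1.unpair.1.unpair.2))).bind
        (stp2 (fun e => tEA) (fun e => e.unpair.1.unpair.2) (fun e => e.unpair.2))).map (fun e => e.unpair.2) with hrun
  have hrunp : Partrec run := by
      exact Partrec.map (chain_partrec (chain_partrec (chain_partrec (chain_partrec (chain_partrec (chain_partrec (chain_partrec (chain_partrec (chain_partrec (chain_partrec (chain_partrec (stp2_partrec (cmpU1 (cmpU2 (cmpU2 (cmpU1 (Computable.id))))) (cmpU1 (cmpU2 (cmpU2 (cmpU2 (cmpU1 (Computable.id)))))) (cmpU1 (cmpU2 (cmpU2 (cmpU2 (cmpU1 (Computable.id)))))))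
        (stp2_partrec (cmpU1 (cmpU2 (cmpU2 (cmpU1 (Computable.id))))) (cmpU1 (cmpU2 (cmpU2 (cmpU2 (cmpU1 (Computable.id)))))) (cmpU1 (cmpU2 (cmpU2 (cmpU2 (cmpU1 (Computable.id))))))))
        (stp2_partrec (Computable.const singA) (cmpU2 (cmpU1 (cmpU1 (cmpU1 (Computable.id))))) (cmpU1 (cmpU2 (cmpU2 (cmpU2 (cmpU1 (cmpU1 (cmpU1 (Computable.id))))))))))
        (stp2_partrec (Computable.const singB) (cmpU2 (cmpU1 (cmpU1 (cmpU1 (Computable.id))))) (cmpU1 (cmpU2 (cmpU2 (cmpU2 (cmpU1 (cmpU1 (cmpU1 (Computable.id))))))))))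
        (stp2_partrec (Computable.const hc) (cmpU2 (cmpU1 (Computable.id))) (cmpU2 (Computable.id))))
        (stp2_partrec (Computable.const hce) (cmpU2 (cmpU1 (cmpU1 (cmpU1 (cmpU1 (Computable.id)))))) (cmpU2 (cmpU1 (cmpU1 (cmpU1 (Computable.id)))))))
        (stp2_partrec (Computable.const tEP) (cmpU2 (cmpU1 (Computable.id))) (cmpU2 (Computable.id))))
        (stp1_partrec (Computable.const h1) (cmpU2 (Computable.id))))
        (stp1_partrec (Computable.const h1e) (cmpPair (cmpU2 (cmpU1 (cmpU1 (cmpU1 (cmpU1 (cmpU1 (cmpU1 (cmpU1 (Computable.id))))))))) (cmpU2 (cmpU1 (cmpU1 (cmpU1 (cmpU1 (cmpU1 (cmpU1 (Computable.id)))))))))))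
        (stp2_partrec (Computable.const tEA) (cmpU2 (cmpU1 (Computable.id))) (cmpU2 (Computable.id))))
        (stp1_partrec (Computable.const sEA) (cmpU2 (cmpU1 (cmpU1 (cmpU1 (cmpU1 (cmpU1 (cmpU1 (cmpU1 (Computable.id)))))))))))
        (stp2_partrec (Computable.const tEA) (cmpU2 (cmpU1 (Computable.id))) (cmpU2 (Computable.id))))
        (Computable₂.mk (cmpU2 (Computable.snd)))
  have := forces2 (ι := (A → Set ℕ) × (B → Set ℕ))
    (F := fun i => elEq eqA i.1 i.1) (G := fun i => elEq eqB i.2 i.2)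
    (H := fun i => elEq eqA (p1 (cons i.1 i.2)) i.1)
    (f := fun q r => run (Nat.pair (Nat.pair 0 q) r))
    (hrunp.comp (cmpPair (cmpPair (Computable.const 0) (cmpU1 Computable.id))
      (cmpU2 Computable.id))) ?_
  · obtain ⟨e, he⟩ := this
    exact ⟨e, fun u v => he (u, v)⟩
  rintro ⟨u, v⟩ eu heu ev hev
  show ∃ m ∈ elEq eqA (p1 (cons u v)) u, m ∈ run (Nat.pair (Nat.pair 0 eu) ev)
  obtain ⟨hSu, hUu, ⟨a, ha⟩, hIu⟩ := elEq_dest heu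
  obtain ⟨hSv, hUv, ⟨b, hb⟩, hIv⟩ := elEq_dest hev
  obtain ⟨rA, hrA, hrAm⟩ := ap2_spec (hUu a a) ha ha
  obtain ⟨rB, hrB, hrBm⟩ := ap2_spec (hUv b b) hb hb
  obtain ⟨qa, hqa, hqam⟩ := ap2_spec (hsingA u a) heu ha
  obtain ⟨qb, hqb, hqbm⟩ := ap2_spec (hsingB v b) hev hb
  obtain ⟨cc1, hcc1, hcc1m⟩ := ap2_spec (hhc u (el eqA a) v (el eqB b)) hqa hqb
  obtain ⟨cc2, hcc2, hcc2m⟩ := ap2_spec (hhce a b) hrA hrB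
  obtain ⟨cc3, hcc3, hcc3m⟩ := ap2_spec (htEP (cons u v) (cons (el eqA a) (el eqB b))
    (el (prodEq eqA eqB) (a, b))) hcc1 hcc2
  obtain ⟨d1, hd1, hd1m⟩ := hh1 (cons u v) (el (prodEq eqA eqB) (a, b)) cc3 hcc3
  obtain ⟨d2, hd2, hd2m⟩ := hh1e (a, b) (Nat.pair rA rB) (rAnd_pair_mem hrA hrB)
  obtain ⟨d3, hd3, hd3m⟩ := ap2_spec (htEA (p1 (cons u v))
    (p1 (el (prodEq eqA eqB) (a, b))) (el eqA (a, b).1)) hd1 hd2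
  obtain ⟨sq, hsq, hsqm⟩ := hsEA u (el eqA a) qa hqa
  obtain ⟨res, hres, hresm⟩ := ap2_spec (htEA (p1 (cons u v)) (el eqA (a, b).1) u) hd3 hsq
  set e0 := Nat.pair (Nat.pair 0 eu) ev with he0
  set e1 := Nat.pair e0 rA with he1
  set e2 := Nat.pair e1 rB with he2
  set e3 := Nat.pair e2 qa with he3
  set e4 := Nat.pair e3 qb with he4
  set e5 := Nat.pair e4 cc1 with he5
  set e6 := Nat.pair e5 cc2 with he6
  set e7 := Nat.pair e6 cc3 with he7
  set e8 := Nat.pair e7 d1 with he8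
  set e9 := Nat.pair e8 d2 with he9
  set e10 := Nat.pair e9 d3 with he10
  set e11 := Nat.pair e10 sq with he11
  set e12 := Nat.pair e11 res with he12
  have hs1 : e1 ∈ (stp2 (fun e => e.unpair.1.unpair.2.unpair.2.unpair.1) (fun e => e.unpair.1.unpair.2.unpair.2.unpair.2.unpair.1) (fun e => e.unpair.1.unpair.2.unpair.2.unpair.2.unpair.1)) e0 :=
    stp2_mem (by simpa only [he0, Nat.unpair_pair, cS, cU, cE, cF, cB] using hrAm)
  have hs2 : e2 ∈ (stp2 (fun e => e.unpair.1.unpair.2.unpair.2.unpair.1) (fun e => e.unpair.1.unpair.2.unpair.2.unpair.2.unpair.1) (fun e => e.unpair.1.unpair.2.unpair.2.unpair.2.unpair.1)) e1 :=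
    stp2_mem (by simpa only [he1, he0, Nat.unpair_pair, cS, cU, cE, cF, cB] using hrBm)
  have hs3 : e3 ∈ (stp2 (fun e => singA) (fun e => e.unpair.1.unpair.1.unpair.1.unpair.2) (fun e => e.unpair.1.unpair.1.unpair.1.unpair.2.unpair.2.unpair.2.unpair.1)) e2 :=
    stp2_mem (by simpa only [he2, he1, he0, Nat.unpair_pair, cS, cU, cE, cF, cB] using hqam)
  have hs4 : e4 ∈ (stp2 (fun e => singB) (fun e => e.unpair.1.unpair.1.unpair.1.unpair.2) (fun e => e.unpair.1.unpair.1.unpair.1.unpair.2.unpair.2.unpair.2.unpair.1)) e3 :=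
    stp2_mem (by simpa only [he3, he2, he1, he0, Nat.unpair_pair, cS, cU, cE, cF, cB] using hqbm)
  have hs5 : e5 ∈ (stp2 (fun e => hc) (fun e => e.unpair.1.unpair.2) (fun e => e.unpair.2)) e4 :=
    stp2_mem (by simpa only [he4, he3, he2, he1, he0, Nat.unpair_pair, cS, cU, cE, cF, cB] using hcc1m)
  have hs6 : e6 ∈ (stp2 (fun e => hce) (fun e => e.unpair.1.unpair.1.unpair.1.unpair.1.unpair.2) (fun e => e.unpair.1.unpair.1.unpair.1.unpair.2)) e5 :=
    stp2_mem (by simpa only [he5, he4, he3, he2, he1, he0, Nat.unpair_pair, cS, cU, cE, cF, cB] using hcc2m)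
  have hs7 : e7 ∈ (stp2 (fun e => tEP) (fun e => e.unpair.1.unpair.2) (fun e => e.unpair.2)) e6 :=
    stp2_mem (by simpa only [he6, he5, he4, he3, he2, he1, he0, Nat.unpair_pair, cS, cU, cE, cF, cB] using hcc3m)
  have hs8 : e8 ∈ (stp1 (fun e => h1) (fun e => e.unpair.2)) e7 :=
    stp1_mem (by simpa only [he7, he6, he5, he4, he3, he2, he1, he0, Nat.unpair_pair, cS, cU, cE, cF, cB] using hd1m)
  have hs9 : e9 ∈ (stp1 (fun e => h1e) (fun e => Nat.pair (e.unpair.1.unpair.1.unpair.1.unpair.1.unpair.1.unpair.1.unpair.1.unpair.2) (e.unpair.1.unpair.1.unpair.1.unpair.1.unpair.1.unpair.1.unpair.2))) e8 :=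
    stp1_mem (by simpa only [he8, he7, he6, he5, he4, he3, he2, he1, he0, Nat.unpair_pair, cS, cU, cE, cF, cB] using hd2m)
  have hs10 : e10 ∈ (stp2 (fun e => tEA) (fun e => e.unpair.1.unpair.2) (fun e => e.unpair.2)) e9 :=
    stp2_mem (by simpa only [he9, he8, he7, he6, he5, he4, he3, he2, he1, he0, Nat.unpair_pair, cS, cU, cE, cF, cB] using hd3m)
  have hs11 : e11 ∈ (stp1 (fun e => sEA) (fun e => e.unpair.1.unpair.1.unpair.1.unpair.1.unpair.1.unpair.1.unpair.1.unpair.2)) e10 :=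
    stp1_mem (by simpa only [he10, he9, he8, he7, he6, he5, he4, he3, he2, he1, he0, Nat.unpair_pair, cS, cU, cE, cF, cB] using hsqm)
  have hs12 : e12 ∈ (stp2 (fun e => tEA) (fun e => e.unpair.1.unpair.2) (fun e => e.unpair.2)) e11 :=
    stp2_mem (by simpa only [he11, he10, he9, he8, he7, he6, he5, he4, he3, he2, he1, he0, Nat.unpair_pair, cS, cU, cE, cF, cB] using hresm)
  have hchain := (Part.mem_bind (Part.mem_bind (Part.mem_bind (Part.mem_bind (Part.mem_bind (Part.mem_bind (Part.mem_bind (Part.mem_bind (Part.mem_bind (Part.mem_bind (Part.mem_bind hs1 hs2) hs3) hs4) hs5) hs6) hs7) hs8) hs9) hs10) hs11) hs12)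
  have hfin := Part.mem_map (fun e : ℕ => e.unpair.2) hchain
  exact ⟨res, hres, by
    simpa only [hrun, he12, he11, he10, he9, he8, he7, he6, he5, he4, he3, he2, he1, he0,
      Nat.unpair_pair] using hfin⟩

/-! ### Part 2: beta rule for the second projection -/

theorem beta_p2 {A B : Type} {eqA : A → A → Set ℕ} {eqB : B → B → Set ℕ}
    {p2 : (A × B → Set ℕ) → (B → Set ℕ)}
    {cons : (A → Set ℕ) → (B → Set ℕ) → (A × B → Set ℕ)}
    {hc h2 h2e hce tEB tEP sEB singA singB : ℕ}
    (hhc : ∀ (u u' : A → Set ℕ) (v v' : B → Set ℕ), hc ∈ rImp (elEq eqA u u')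
      (rImp (elEq eqB v v') (elEq (prodEq eqA eqB) (cons u v) (cons u' v'))))
    (hh2 : ∀ w w' : A × B → Set ℕ, h2 ∈ rImp (elEq (prodEq eqA eqB) w w')
      (elEq eqB (p2 w) (p2 w')))
    (hh2e : ∀ c : A × B, h2e ∈ rImp (prodEq eqA eqB c c)
      (elEq eqB (p2 (el (prodEq eqA eqB) c)) (el eqB c.2)))
    (hhce : ∀ (a : A) (b : B), hce ∈ rImp (eqA a a) (rImp (eqB b b)
      (elEq (prodEq eqA eqB) (cons (el eqA a) (el eqB b)) (el (prodEq eqA eqB) (a, b)))))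
    (htEB : ∀ w w₁ w₂ : B → Set ℕ, tEB ∈ rImp (elEq eqB w w₁)
      (rImp (elEq eqB w₁ w₂) (elEq eqB w w₂)))
    (htEP : ∀ w w₁ w₂ : A × B → Set ℕ, tEP ∈ rImp (elEq (prodEq eqA eqB) w w₁)
      (rImp (elEq (prodEq eqA eqB) w₁ w₂) (elEq (prodEq eqA eqB) w w₂)))
    (hsEB : ∀ w w' : B → Set ℕ, sEB ∈ rImp (elEq eqB w w') (elEq eqB w' w))
    (hsingA : ∀ (w : A → Set ℕ) (a : A), singA ∈ rImp (elEq eqA w w)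
      (rImp (w a) (elEq eqA w (el eqA a))))
    (hsingB : ∀ (w : B → Set ℕ) (b : B), singB ∈ rImp (elEq eqB w w)
      (rImp (w b) (elEq eqB w (el eqB b)))) :
    ∃ e : ℕ, ∀ (u : A → Set ℕ) (v : B → Set ℕ), e ∈ rImp (elEq eqA u u)
      (rImp (elEq eqB v v) (elEq eqB (p2 (cons u v)) v)) := by
  classical
  set run : ℕ →. ℕ := fun e0 =>
      ((((((((((((stp2 (fun e => e.unpair.1.unpair.2.unpair.2.unpair.1) (fun e => e.unpair.1.unpair.2.unpair.2.unpair.2.unpair.1) (fun e => e.unpair.1.unpair.2.unpair.2.unpair.2.unpair.1) e0).bind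
        (stp2 (fun e => e.unpair.1.unpair.2.unpair.2.unpair.1) (fun e => e.unpair.1.unpair.2.unpair.2.unpair.2.unpair.1) (fun e => e.unpair.1.unpair.2.unpair.2.unpair.2.unpair.1))).bind
        (stp2 (fun e => singA) (fun e => e.unpair.1.unpair.1.unpair.1.unpair.2) (fun e => e.unpair.1.unpair.1.unpair.1.unpair.2.unpair.2.unpair.2.unpair.1))).bind
        (stp2 (fun e => singB) (fun e => e.unpair.1.unpair.1.unpair.1.unpair.2) (fun e => e.unpair.1.unpair.1.unpair.1.unpair.2.unpair.2.unpair.2.unpair.1))).bind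
        (stp2 (fun e => hc) (fun e => e.unpair.1.unpair.2) (fun e => e.unpair.2))).bind
        (stp2 (fun e => hce) (fun e => e.unpair.1.unpair.1.unpair.1.unpair.1.unpair.2) (fun e => e.unpair.1.unpair.1.unpair.1.unpair.2))).bind
        (stp2 (fun e => tEP) (fun e => e.unpair.1.unpair.2) (fun e => e.unpair.2))).bind
        (stp1 (fun e => h2) (fun e => e.unpair.2))).bind
        (stp1 (fun e => h2e) (fun e => Nat.pair (e.unpair.1.unpair.1.unpair.1.unpair.1.unpair.1.unpair.1.unpair.1.unpair.2) (e.unpair.1.unpair.1.unpair.1.unpair.1.unpair.1.unpair.1.unpair.2)))).bind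
        (stp2 (fun e => tEB) (fun e => e.unpair.1.unpair.2) (fun e => e.unpair.2))).bind
        (stp1 (fun e => sEB) (fun e => e.unpair.1.unpair.1.unpair.1.unpair.1.unpair.1.unpair.1.unpair.2))).bind
        (stp2 (fun e => tEB) (fun e => e.unpair.1.unpair.2) (fun e => e.unpair.2))).map (fun e => e.unpair.2) with hrun
  have hrunp : Partrec run := by
      exact Partrec.map (chain_partrec (chain_partrec (chain_partrec (chain_partrec (chain_partrec (chain_partrec (chain_partrec (chain_partrec (chain_partrec (chain_partrec (chain_partrec (stp2_partrec (cmpU1 (cmpU2 (cmpU2 (cmpU1 (Computable.id))))) (cmpU1 (cmpU2 (cmpU2 (cmpU2 (cmpU1 (Computable.id)))))) (cmpU1 (cmpU2 (cmpU2 (cmpU2 (cmpU1 (Computable.id)))))))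
        (stp2_partrec (cmpU1 (cmpU2 (cmpU2 (cmpU1 (Computable.id))))) (cmpU1 (cmpU2 (cmpU2 (cmpU2 (cmpU1 (Computable.id)))))) (cmpU1 (cmpU2 (cmpU2 (cmpU2 (cmpU1 (Computable.id))))))))
        (stp2_partrec (Computable.const singA) (cmpU2 (cmpU1 (cmpU1 (cmpU1 (Computable.id))))) (cmpU1 (cmpU2 (cmpU2 (cmpU2 (cmpU1 (cmpU1 (cmpU1 (Computable.id))))))))))
        (stp2_partrec (Computable.const singB) (cmpU2 (cmpU1 (cmpU1 (cmpU1 (Computable.id))))) (cmpU1 (cmpU2 (cmpU2 (cmpU2 (cmpU1 (cmpU1 (cmpU1 (Computable.id))))))))))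
        (stp2_partrec (Computable.const hc) (cmpU2 (cmpU1 (Computable.id))) (cmpU2 (Computable.id))))
        (stp2_partrec (Computable.const hce) (cmpU2 (cmpU1 (cmpU1 (cmpU1 (cmpU1 (Computable.id)))))) (cmpU2 (cmpU1 (cmpU1 (cmpU1 (Computable.id)))))))
        (stp2_partrec (Computable.const tEP) (cmpU2 (cmpU1 (Computable.id))) (cmpU2 (Computable.id))))
        (stp1_partrec (Computable.const h2) (cmpU2 (Computable.id))))
        (stp1_partrec (Computable.const h2e) (cmpPair (cmpU2 (cmpU1 (cmpU1 (cmpU1 (cmpU1 (cmpU1 (cmpU1 (cmpU1 (Computable.id))))))))) (cmpU2 (cmpU1 (cmpU1 (cmpU1 (cmpU1 (cmpU1 (cmpU1 (Computable.id)))))))))))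
        (stp2_partrec (Computable.const tEB) (cmpU2 (cmpU1 (Computable.id))) (cmpU2 (Computable.id))))
        (stp1_partrec (Computable.const sEB) (cmpU2 (cmpU1 (cmpU1 (cmpU1 (cmpU1 (cmpU1 (cmpU1 (Computable.id))))))))))
        (stp2_partrec (Computable.const tEB) (cmpU2 (cmpU1 (Computable.id))) (cmpU2 (Computable.id))))
        (Computable₂.mk (cmpU2 (Computable.snd)))
  have := forces2 (ι := (A → Set ℕ) × (B → Set ℕ))
    (F := fun i => elEq eqA i.1 i.1) (G := fun i => elEq eqB i.2 i.2)
    (H := fun i => elEq eqB (p2 (cons i.1 i.2)) i.2)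
    (f := fun q r => run (Nat.pair (Nat.pair 0 q) r))
    (hrunp.comp (cmpPair (cmpPair (Computable.const 0) (cmpU1 Computable.id))
      (cmpU2 Computable.id))) ?_
  · obtain ⟨e, he⟩ := this
    exact ⟨e, fun u v => he (u, v)⟩
  rintro ⟨u, v⟩ eu heu ev hev
  show ∃ m ∈ elEq eqB (p2 (cons u v)) v, m ∈ run (Nat.pair (Nat.pair 0 eu) ev)
  obtain ⟨hSu, hUu, ⟨a, ha⟩, hIu⟩ := elEq_dest heu
  obtain ⟨hSv, hUv, ⟨b, hb⟩, hIv⟩ := elEq_dest hev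
  obtain ⟨rA, hrA, hrAm⟩ := ap2_spec (hUu a a) ha ha
  obtain ⟨rB, hrB, hrBm⟩ := ap2_spec (hUv b b) hb hb
  obtain ⟨qa, hqa, hqam⟩ := ap2_spec (hsingA u a) heu ha
  obtain ⟨qb, hqb, hqbm⟩ := ap2_spec (hsingB v b) hev hb
  obtain ⟨cc1, hcc1, hcc1m⟩ := ap2_spec (hhc u (el eqA a) v (el eqB b)) hqa hqb
  obtain ⟨cc2, hcc2, hcc2m⟩ := ap2_spec (hhce a b) hrA hrB
  obtain ⟨cc3, hcc3, hcc3m⟩ := ap2_spec (htEP (cons u v) (cons (el eqA a) (el eqB b))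
    (el (prodEq eqA eqB) (a, b))) hcc1 hcc2
  obtain ⟨d1, hd1, hd1m⟩ := hh2 (cons u v) (el (prodEq eqA eqB) (a, b)) cc3 hcc3
  obtain ⟨d2, hd2, hd2m⟩ := hh2e (a, b) (Nat.pair rA rB) (rAnd_pair_mem hrA hrB)
  obtain ⟨d3, hd3, hd3m⟩ := ap2_spec (htEB (p2 (cons u v))
    (p2 (el (prodEq eqA eqB) (a, b))) (el eqB (a, b).2)) hd1 hd2
  obtain ⟨sq, hsq, hsqm⟩ := hsEB v (el eqB b) qb hqb
  obtain ⟨res, hres, hresm⟩ := ap2_spec (htEB (p2 (cons u v)) (el eqB (a, b).2) v) hd3 hsq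
  set e0 := Nat.pair (Nat.pair 0 eu) ev with he0
  set e1 := Nat.pair e0 rA with he1
  set e2 := Nat.pair e1 rB with he2
  set e3 := Nat.pair e2 qa with he3
  set e4 := Nat.pair e3 qb with he4
  set e5 := Nat.pair e4 cc1 with he5
  set e6 := Nat.pair e5 cc2 with he6
  set e7 := Nat.pair e6 cc3 with he7
  set e8 := Nat.pair e7 d1 with he8
  set e9 := Nat.pair e8 d2 with he9
  set e10 := Nat.pair e9 d3 with he10
  set e11 := Nat.pair e10 sq with he11
  set e12 := Nat.pair e11 res with he12
  have hs1 : e1 ∈ (stp2 (fun e => e.unpair.1.unpair.2.unpair.2.unpair.1) (fun e => e.unpair.1.unpair.2.unpair.2.unpair.2.unpair.1) (fun e => e.unpair.1.unpair.2.unpair.2.unpair.2.unpair.1)) e0 :=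
    stp2_mem (by simpa only [he0, Nat.unpair_pair, cS, cU, cE, cF, cB] using hrAm)
  have hs2 : e2 ∈ (stp2 (fun e => e.unpair.1.unpair.2.unpair.2.unpair.1) (fun e => e.unpair.1.unpair.2.unpair.2.unpair.2.unpair.1) (fun e => e.unpair.1.unpair.2.unpair.2.unpair.2.unpair.1)) e1 :=
    stp2_mem (by simpa only [he1, he0, Nat.unpair_pair, cS, cU, cE, cF, cB] using hrBm)
  have hs3 : e3 ∈ (stp2 (fun e => singA) (fun e => e.unpair.1.unpair.1.unpair.1.unpair.2) (fun e => e.unpair.1.unpair.1.unpair.1.unpair.2.unpair.2.unpair.2.unpair.1)) e2 :=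
    stp2_mem (by simpa only [he2, he1, he0, Nat.unpair_pair, cS, cU, cE, cF, cB] using hqam)
  have hs4 : e4 ∈ (stp2 (fun e => singB) (fun e => e.unpair.1.unpair.1.unpair.1.unpair.2) (fun e => e.unpair.1.unpair.1.unpair.1.unpair.2.unpair.2.unpair.2.unpair.1)) e3 :=
    stp2_mem (by simpa only [he3, he2, he1, he0, Nat.unpair_pair, cS, cU, cE, cF, cB] using hqbm)
  have hs5 : e5 ∈ (stp2 (fun e => hc) (fun e => e.unpair.1.unpair.2) (fun e => e.unpair.2)) e4 :=
    stp2_mem (by simpa only [he4, he3, he2, he1, he0, Nat.unpair_pair, cS, cU, cE, cF, cB] using hcc1m)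
  have hs6 : e6 ∈ (stp2 (fun e => hce) (fun e => e.unpair.1.unpair.1.unpair.1.unpair.1.unpair.2) (fun e => e.unpair.1.unpair.1.unpair.1.unpair.2)) e5 :=
    stp2_mem (by simpa only [he5, he4, he3, he2, he1, he0, Nat.unpair_pair, cS, cU, cE, cF, cB] using hcc2m)
  have hs7 : e7 ∈ (stp2 (fun e => tEP) (fun e => e.unpair.1.unpair.2) (fun e => e.unpair.2)) e6 :=
    stp2_mem (by simpa only [he6, he5, he4, he3, he2, he1, he0, Nat.unpair_pair, cS, cU, cE, cF, cB] using hcc3m)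
  have hs8 : e8 ∈ (stp1 (fun e => h2) (fun e => e.unpair.2)) e7 :=
    stp1_mem (by simpa only [he7, he6, he5, he4, he3, he2, he1, he0, Nat.unpair_pair, cS, cU, cE, cF, cB] using hd1m)
  have hs9 : e9 ∈ (stp1 (fun e => h2e) (fun e => Nat.pair (e.unpair.1.unpair.1.unpair.1.unpair.1.unpair.1.unpair.1.unpair.1.unpair.2) (e.unpair.1.unpair.1.unpair.1.unpair.1.unpair.1.unpair.1.unpair.2))) e8 :=
    stp1_mem (by simpa only [he8, he7, he6, he5, he4, he3, he2, he1, he0, Nat.unpair_pair, cS, cU, cE, cF, cB] using hd2m)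
  have hs10 : e10 ∈ (stp2 (fun e => tEB) (fun e => e.unpair.1.unpair.2) (fun e => e.unpair.2)) e9 :=
    stp2_mem (by simpa only [he9, he8, he7, he6, he5, he4, he3, he2, he1, he0, Nat.unpair_pair, cS, cU, cE, cF, cB] using hd3m)
  have hs11 : e11 ∈ (stp1 (fun e => sEB) (fun e => e.unpair.1.unpair.1.unpair.1.unpair.1.unpair.1.unpair.1.unpair.2)) e10 :=
    stp1_mem (by simpa only [he10, he9, he8, he7, he6, he5, he4, he3, he2, he1, he0, Nat.unpair_pair, cS, cU, cE, cF, cB] using hsqm)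
  have hs12 : e12 ∈ (stp2 (fun e => tEB) (fun e => e.unpair.1.unpair.2) (fun e => e.unpair.2)) e11 :=
    stp2_mem (by simpa only [he11, he10, he9, he8, he7, he6, he5, he4, he3, he2, he1, he0, Nat.unpair_pair, cS, cU, cE, cF, cB] using hresm)
  have hchain := (Part.mem_bind (Part.mem_bind (Part.mem_bind (Part.mem_bind (Part.mem_bind (Part.mem_bind (Part.mem_bind (Part.mem_bind (Part.mem_bind (Part.mem_bind (Part.mem_bind hs1 hs2) hs3) hs4) hs5) hs6) hs7) hs8) hs9) hs10) hs11) hs12)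
  have hfin := Part.mem_map (fun e : ℕ => e.unpair.2) hchain
  exact ⟨res, hres, by
    simpa only [hrun, he12, he11, he10, he9, he8, he7, he6, he5, he4, he3, he2, he1, he0,
      Nat.unpair_pair] using hfin⟩

/-! ### Part 3: surjective pairing / extensionality -/

theorem eta_pair {A B : Type} {eqA : A → A → Set ℕ} {eqB : B → B → Set ℕ}
    {p1 : (A × B → Set ℕ) → (A → Set ℕ)} {p2 : (A × B → Set ℕ) → (B → Set ℕ)}
    {h1 h1e h2 h2e tEA tEB tEP sEA sEB sEP singP elP : ℕ}
    (hh1 : ∀ w w' : A × B → Set ℕ, h1 ∈ rImp (elEq (prodEq eqA eqB) w w')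
      (elEq eqA (p1 w) (p1 w')))
    (hh1e : ∀ c : A × B, h1e ∈ rImp (prodEq eqA eqB c c)
      (elEq eqA (p1 (el (prodEq eqA eqB) c)) (el eqA c.1)))
    (hh2 : ∀ w w' : A × B → Set ℕ, h2 ∈ rImp (elEq (prodEq eqA eqB) w w')
      (elEq eqB (p2 w) (p2 w')))
    (hh2e : ∀ c : A × B, h2e ∈ rImp (prodEq eqA eqB c c)
      (elEq eqB (p2 (el (prodEq eqA eqB) c)) (el eqB c.2)))
    (htEA : ∀ w w₁ w₂ : A → Set ℕ, tEA ∈ rImp (elEq eqA w w₁)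
      (rImp (elEq eqA w₁ w₂) (elEq eqA w w₂)))
    (htEB : ∀ w w₁ w₂ : B → Set ℕ, tEB ∈ rImp (elEq eqB w w₁)
      (rImp (elEq eqB w₁ w₂) (elEq eqB w w₂)))
    (htEP : ∀ w w₁ w₂ : A × B → Set ℕ, tEP ∈ rImp (elEq (prodEq eqA eqB) w w₁)
      (rImp (elEq (prodEq eqA eqB) w₁ w₂) (elEq (prodEq eqA eqB) w w₂)))
    (hsEA : ∀ w w' : A → Set ℕ, sEA ∈ rImp (elEq eqA w w') (elEq eqA w' w))
    (hsEB : ∀ w w' : B → Set ℕ, sEB ∈ rImp (elEq eqB w w') (elEq eqB w' w))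
    (hsEP : ∀ w w' : A × B → Set ℕ, sEP ∈ rImp (elEq (prodEq eqA eqB) w w')
      (elEq (prodEq eqA eqB) w' w))
    (hsingP : ∀ (w : A × B → Set ℕ) (c : A × B), singP ∈ rImp
      (elEq (prodEq eqA eqB) w w) (rImp (w c) (elEq (prodEq eqA eqB) w
        (el (prodEq eqA eqB) c))))
    (helP : ∀ c c' : A × B, elP ∈ rImp (prodEq eqA eqB c c')
      (elEq (prodEq eqA eqB) (el (prodEq eqA eqB) c) (el (prodEq eqA eqB) c'))) :
    ∃ e : ℕ, ∀ w w' : A × B → Set ℕ, e ∈ rImp (elEq (prodEq eqA eqB) w w)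
      (rImp (elEq (prodEq eqA eqB) w' w') (rImp (elEq eqA (p1 w) (p1 w'))
        (rImp (elEq eqB (p2 w) (p2 w')) (elEq (prodEq eqA eqB) w w')))) := by
  classical
  set run : ℕ →. ℕ := fun e0 =>
      ((((((((((((((((((((((((((((stp2 (fun e => e.unpair.1.unpair.1.unpair.1.unpair.2.unpair.2.unpair.1) (fun e => e.unpair.1.unpair.1.unpair.1.unpair.2.unpair.2.unpair.2.unpair.1) (fun e => e.unpair.1.unpair.1.unpair.1.unpair.2.unpair.2.unpair.2.unpair.1) e0).bind
        (stp2 (fun e => e.unpair.1.unpair.1.unpair.1.unpair.2.unpair.2.unpair.1) (fun e => e.unpair.1.unpair.1.unpair.1.unpair.2.unpair.2.unpair.2.unpair.1) (fun e => e.unpair.1.unpair.1.unpair.1.unpair.2.unpair.2.unpair.2.unpair.1))).bind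
        (stp2 (fun e => singP) (fun e => e.unpair.1.unpair.1.unpair.1.unpair.1.unpair.1.unpair.2) (fun e => e.unpair.1.unpair.1.unpair.1.unpair.1.unpair.1.unpair.2.unpair.2.unpair.2.unpair.1))).bind
        (stp2 (fun e => singP) (fun e => e.unpair.1.unpair.1.unpair.1.unpair.1.unpair.1.unpair.2) (fun e => e.unpair.1.unpair.1.unpair.1.unpair.1.unpair.1.unpair.2.unpair.2.unpair.2.unpair.1))).bind
        (stp1 (fun e => h1) (fun e => e.unpair.1.unpair.2))).bind
        (stp1 (fun e => h1e) (fun e => e.unpair.1.unpair.1.unpair.1.unpair.1.unpair.2))).bind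
        (stp2 (fun e => tEA) (fun e => e.unpair.1.unpair.2) (fun e => e.unpair.2))).bind
        (stp1 (fun e => h1) (fun e => e.unpair.1.unpair.1.unpair.1.unpair.2))).bind
        (stp1 (fun e => h1e) (fun e => e.unpair.1.unpair.1.unpair.1.unpair.1.unpair.1.unpair.1.unpair.2))).bind
        (stp2 (fun e => tEA) (fun e => e.unpair.1.unpair.2) (fun e => e.unpair.2))).bind
        (stp1 (fun e => sEA) (fun e => e.unpair.1.unpair.1.unpair.1.unpair.2))).bind
        (stp2 (fun e => tEA) (fun e => e.unpair.1.unpair.1.unpair.1.unpair.1.unpair.1.unpair.1.unpair.1.unpair.1.unpair.1.unpair.1.unpair.1.unpair.1.unpair.2) (fun e => e.unpair.1.unpair.2))).bind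
        (stp2 (fun e => tEA) (fun e => e.unpair.1.unpair.2) (fun e => e.unpair.2))).bind
        (stp1 (fun e => e.unpair.2.unpair.2.unpair.2.unpair.2.unpair.2) (fun e => e.unpair.1.unpair.1.unpair.1.unpair.1.unpair.1.unpair.1.unpair.1.unpair.1.unpair.1.unpair.1.unpair.1.unpair.2.unpair.1))).bind
        (stp1 (fun e => h2) (fun e => e.unpair.1.unpair.1.unpair.1.unpair.1.unpair.1.unpair.1.unpair.1.unpair.1.unpair.1.unpair.1.unpair.1.unpair.2))).bind
        (stp1 (fun e => h2e) (fun e => e.unpair.1.unpair.1.unpair.1.unpair.1.unpair.1.unpair.1.unpair.1.unpair.1.unpair.1.unpair.1.unpair.1.unpair.1.unpair.1.unpair.1.unpair.2))).bind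
        (stp2 (fun e => tEB) (fun e => e.unpair.1.unpair.2) (fun e => e.unpair.2))).bind
        (stp1 (fun e => h2) (fun e => e.unpair.1.unpair.1.unpair.1.unpair.1.unpair.1.unpair.1.unpair.1.unpair.1.unpair.1.unpair.1.unpair.1.unpair.1.unpair.1.unpair.2))).bind
        (stp1 (fun e => h2e) (fun e => e.unpair.1.unpair.1.unpair.1.unpair.1.unpair.1.unpair.1.unpair.1.unpair.1.unpair.1.unpair.1.unpair.1.unpair.1.unpair.1.unpair.1.unpair.1.unpair.1.unpair.2))).bind
        (stp2 (fun e => tEB) (fun e => e.unpair.1.unpair.2) (fun e => e.unpair.2))).bind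
        (stp1 (fun e => sEB) (fun e => e.unpair.1.unpair.1.unpair.1.unpair.2))).bind
        (stp2 (fun e => tEB) (fun e => e.unpair.1.unpair.1.unpair.1.unpair.1.unpair.1.unpair.1.unpair.1.unpair.1.unpair.1.unpair.1.unpair.1.unpair.1.unpair.1.unpair.1.unpair.1.unpair.1.unpair.1.unpair.1.unpair.1.unpair.1.unpair.1.unpair.2) (fun e => e.unpair.1.unpair.2))).bind
        (stp2 (fun e => tEB) (fun e => e.unpair.1.unpair.2) (fun e => e.unpair.2))).bind
        (stp1 (fun e => e.unpair.2.unpair.2.unpair.2.unpair.2.unpair.2) (fun e => e.unpair.1.unpair.1.unpair.1.unpair.1.unpair.1.unpair.1.unpair.1.unpair.1.unpair.1.unpair.1.unpair.1.unpair.1.unpair.1.unpair.1.unpair.1.unpair.1.unpair.1.unpair.1.unpair.1.unpair.1.unpair.1.unpair.2.unpair.2))).bind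
        (stp1 (fun e => elP) (fun e => Nat.pair (e.unpair.1.unpair.1.unpair.1.unpair.1.unpair.1.unpair.1.unpair.1.unpair.1.unpair.1.unpair.1.unpair.2) (e.unpair.2)))).bind
        (stp1 (fun e => sEP) (fun e => e.unpair.1.unpair.1.unpair.1.unpair.1.unpair.1.unpair.1.unpair.1.unpair.1.unpair.1.unpair.1.unpair.1.unpair.1.unpair.1.unpair.1.unpair.1.unpair.1.unpair.1.unpair.1.unpair.1.unpair.1.unpair.1.unpair.2))).bind
        (stp2 (fun e => tEP) (fun e => e.unpair.1.unpair.2) (fun e => e.unpair.2))).bind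
        (stp2 (fun e => tEP) (fun e => e.unpair.1.unpair.1.unpair.1.unpair.1.unpair.1.unpair.1.unpair.1.unpair.1.unpair.1.unpair.1.unpair.1.unpair.1.unpair.1.unpair.1.unpair.1.unpair.1.unpair.1.unpair.1.unpair.1.unpair.1.unpair.1.unpair.1.unpair.1.unpair.1.unpair.2) (fun e => e.unpair.2))).map (fun e => e.unpair.2) with hrun
  have hrunp : Partrec run := by
      exact Partrec.map (chain_partrec (chain_partrec (chain_partrec (chain_partrec (chain_partrec (chain_partrec (chain_partrec (chain_partrec (chain_partrec (chain_partrec (chain_partrec (chain_partrec (chain_partrec (chain_partrec (chain_partrec (chain_partrec (chain_partrec (chain_partrec (chain_partrec (chain_partrec (chain_partrec (chain_partrec (chain_partrec (chain_partrec (chain_partrec (chain_partrec (chain_partrec (stp2_partrec (cmpU1 (cmpU2 (cmpU2 (cmpU1 (cmpU1 (cmpU1 (Computable.id))))))) (cmpU1 (cmpU2 (cmpU2 (cmpU2 (cmpU1 (cmpU1 (cmpU1 (Computable.id)))))))) (cmpU1 (cmpU2 (cmpU2 (cmpU2 (cmpU1 (cmpU1 (cmpU1 (Computable.id)))))))))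
        (stp2_partrec (cmpU1 (cmpU2 (cmpU2 (cmpU1 (cmpU1 (cmpU1 (Computable.id))))))) (cmpU1 (cmpU2 (cmpU2 (cmpU2 (cmpU1 (cmpU1 (cmpU1 (Computable.id)))))))) (cmpU1 (cmpU2 (cmpU2 (cmpU2 (cmpU1 (cmpU1 (cmpU1 (Computable.id))))))))))
        (stp2_partrec (Computable.const singP) (cmpU2 (cmpU1 (cmpU1 (cmpU1 (cmpU1 (cmpU1 (Computable.id))))))) (cmpU1 (cmpU2 (cmpU2 (cmpU2 (cmpU1 (cmpU1 (cmpU1 (cmpU1 (cmpU1 (Computable.id))))))))))))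
        (stp2_partrec (Computable.const singP) (cmpU2 (cmpU1 (cmpU1 (cmpU1 (cmpU1 (cmpU1 (Computable.id))))))) (cmpU1 (cmpU2 (cmpU2 (cmpU2 (cmpU1 (cmpU1 (cmpU1 (cmpU1 (cmpU1 (Computable.id))))))))))))
        (stp1_partrec (Computable.const h1) (cmpU2 (cmpU1 (Computable.id)))))
        (stp1_partrec (Computable.const h1e) (cmpU2 (cmpU1 (cmpU1 (cmpU1 (cmpU1 (Computable.id))))))))
        (stp2_partrec (Computable.const tEA) (cmpU2 (cmpU1 (Computable.id))) (cmpU2 (Computable.id))))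
        (stp1_partrec (Computable.const h1) (cmpU2 (cmpU1 (cmpU1 (cmpU1 (Computable.id)))))))
        (stp1_partrec (Computable.const h1e) (cmpU2 (cmpU1 (cmpU1 (cmpU1 (cmpU1 (cmpU1 (cmpU1 (Computable.id))))))))))
        (stp2_partrec (Computable.const tEA) (cmpU2 (cmpU1 (Computable.id))) (cmpU2 (Computable.id))))
        (stp1_partrec (Computable.const sEA) (cmpU2 (cmpU1 (cmpU1 (cmpU1 (Computable.id)))))))
        (stp2_partrec (Computable.const tEA) (cmpU2 (cmpU1 (cmpU1 (cmpU1 (cmpU1 (cmpU1 (cmpU1 (cmpU1 (cmpU1 (cmpU1 (cmpU1 (cmpU1 (cmpU1 (Computable.id)))))))))))))) (cmpU2 (cmpU1 (Computable.id)))))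
        (stp2_partrec (Computable.const tEA) (cmpU2 (cmpU1 (Computable.id))) (cmpU2 (Computable.id))))
        (stp1_partrec (cmpU2 (cmpU2 (cmpU2 (cmpU2 (cmpU2 (Computable.id)))))) (cmpU1 (cmpU2 (cmpU1 (cmpU1 (cmpU1 (cmpU1 (cmpU1 (cmpU1 (cmpU1 (cmpU1 (cmpU1 (cmpU1 (cmpU1 (Computable.id))))))))))))))))
        (stp1_partrec (Computable.const h2) (cmpU2 (cmpU1 (cmpU1 (cmpU1 (cmpU1 (cmpU1 (cmpU1 (cmpU1 (cmpU1 (cmpU1 (cmpU1 (cmpU1 (Computable.id)))))))))))))))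
        (stp1_partrec (Computable.const h2e) (cmpU2 (cmpU1 (cmpU1 (cmpU1 (cmpU1 (cmpU1 (cmpU1 (cmpU1 (cmpU1 (cmpU1 (cmpU1 (cmpU1 (cmpU1 (cmpU1 (cmpU1 (Computable.id))))))))))))))))))
        (stp2_partrec (Computable.const tEB) (cmpU2 (cmpU1 (Computable.id))) (cmpU2 (Computable.id))))
        (stp1_partrec (Computable.const h2) (cmpU2 (cmpU1 (cmpU1 (cmpU1 (cmpU1 (cmpU1 (cmpU1 (cmpU1 (cmpU1 (cmpU1 (cmpU1 (cmpU1 (cmpU1 (cmpU1 (Computable.id)))))))))))))))))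
        (stp1_partrec (Computable.const h2e) (cmpU2 (cmpU1 (cmpU1 (cmpU1 (cmpU1 (cmpU1 (cmpU1 (cmpU1 (cmpU1 (cmpU1 (cmpU1 (cmpU1 (cmpU1 (cmpU1 (cmpU1 (cmpU1 (cmpU1 (Computable.id))))))))))))))))))))
        (stp2_partrec (Computable.const tEB) (cmpU2 (cmpU1 (Computable.id))) (cmpU2 (Computable.id))))
        (stp1_partrec (Computable.const sEB) (cmpU2 (cmpU1 (cmpU1 (cmpU1 (Computable.id)))))))
        (stp2_partrec (Computable.const tEB) (cmpU2 (cmpU1 (cmpU1 (cmpU1 (cmpU1 (cmpU1 (cmpU1 (cmpU1 (cmpU1 (cmpU1 (cmpU1 (cmpU1 (cmpU1 (cmpU1 (cmpU1 (cmpU1 (cmpU1 (cmpU1 (cmpU1 (cmpU1 (cmpU1 (cmpU1 (Computable.id))))))))))))))))))))))) (cmpU2 (cmpU1 (Computable.id)))))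
        (stp2_partrec (Computable.const tEB) (cmpU2 (cmpU1 (Computable.id))) (cmpU2 (Computable.id))))
        (stp1_partrec (cmpU2 (cmpU2 (cmpU2 (cmpU2 (cmpU2 (Computable.id)))))) (cmpU2 (cmpU2 (cmpU1 (cmpU1 (cmpU1 (cmpU1 (cmpU1 (cmpU1 (cmpU1 (cmpU1 (cmpU1 (cmpU1 (cmpU1 (cmpU1 (cmpU1 (cmpU1 (cmpU1 (cmpU1 (cmpU1 (cmpU1 (cmpU1 (cmpU1 (cmpU1 (Computable.id))))))))))))))))))))))))))
        (stp1_partrec (Computable.const elP) (cmpPair (cmpU2 (cmpU1 (cmpU1 (cmpU1 (cmpU1 (cmpU1 (cmpU1 (cmpU1 (cmpU1 (cmpU1 (cmpU1 (Computable.id)))))))))))) (cmpU2 (Computable.id)))))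
        (stp1_partrec (Computable.const sEP) (cmpU2 (cmpU1 (cmpU1 (cmpU1 (cmpU1 (cmpU1 (cmpU1 (cmpU1 (cmpU1 (cmpU1 (cmpU1 (cmpU1 (cmpU1 (cmpU1 (cmpU1 (cmpU1 (cmpU1 (cmpU1 (cmpU1 (cmpU1 (cmpU1 (cmpU1 (Computable.id)))))))))))))))))))))))))
        (stp2_partrec (Computable.const tEP) (cmpU2 (cmpU1 (Computable.id))) (cmpU2 (Computable.id))))
        (stp2_partrec (Computable.const tEP) (cmpU2 (cmpU1 (cmpU1 (cmpU1 (cmpU1 (cmpU1 (cmpU1 (cmpU1 (cmpU1 (cmpU1 (cmpU1 (cmpU1 (cmpU1 (cmpU1 (cmpU1 (cmpU1 (cmpU1 (cmpU1 (cmpU1 (cmpU1 (cmpU1 (cmpU1 (cmpU1 (cmpU1 (cmpU1 (Computable.id)))))))))))))))))))))))))) (cmpU2 (Computable.id))))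
        (Computable₂.mk (cmpU2 (Computable.snd)))
  have := forces4 (ι := (A × B → Set ℕ) × (A × B → Set ℕ))
    (F := fun i => elEq (prodEq eqA eqB) i.1 i.1)
    (G := fun i => elEq (prodEq eqA eqB) i.2 i.2)
    (H := fun i => elEq eqA (p1 i.1) (p1 i.2))
    (K := fun i => elEq eqB (p2 i.1) (p2 i.2))
    (L := fun i => elEq (prodEq eqA eqB) i.1 i.2)
    (f := fun q r s t => run (Nat.pair (Nat.pair (Nat.pair (Nat.pair 0 q) r) s) t))
    (hrunp.comp (cmpPair (cmpPair (cmpPair (cmpPair (Computable.const 0)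
      (cmpU1 Computable.id)) (cmpU1 (cmpU2 Computable.id)))
      (cmpU1 (cmpU2 (cmpU2 Computable.id)))) (cmpU2 (cmpU2 (cmpU2 Computable.id))))) ?_
  · obtain ⟨e, he⟩ := this
    exact ⟨e, fun w w' => he (w, w')⟩
  rintro ⟨w, w'⟩ qw hqw qw2 hqw2 f1 hf1 f2 hf2
  show ∃ m ∈ elEq (prodEq eqA eqB) w w',
    m ∈ run (Nat.pair (Nat.pair (Nat.pair (Nat.pair 0 qw) qw2) f1) f2)
  obtain ⟨hSw, hUw, ⟨c, hcw⟩, hIw⟩ := elEq_dest hqw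
  obtain ⟨hSw2, hUw2, ⟨c', hcw2⟩, hIw2⟩ := elEq_dest hqw2
  obtain ⟨rho, hrho, hrhom⟩ := ap2_spec (hUw c c) hcw hcw
  obtain ⟨rhp, hrhp, hrhpm⟩ := ap2_spec (hUw2 c' c') hcw2 hcw2
  have hrhp1 : rhp.unpair.1 ∈ eqA c'.1 c'.1 := (rAnd_dest hrhp).1
  have hrhp2 : rhp.unpair.2 ∈ eqB c'.2 c'.2 := (rAnd_dest hrhp).2
  obtain ⟨qc, hqc, hqcm⟩ := ap2_spec (hsingP w c) hqw hcw
  obtain ⟨qc2, hqc2, hqc2m⟩ := ap2_spec (hsingP w' c') hqw2 hcw2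
  obtain ⟨g1, hg1, hg1m⟩ := hh1 w (el (prodEq eqA eqB) c) qc hqc
  obtain ⟨g2, hg2, hg2m⟩ := hh1e c rho hrho
  obtain ⟨m1, hm1, hm1m⟩ := ap2_spec (htEA (p1 w) (p1 (el (prodEq eqA eqB) c))
    (el eqA c.1)) hg1 hg2
  obtain ⟨g12, hg12, hg12m⟩ := hh1 w' (el (prodEq eqA eqB) c') qc2 hqc2
  obtain ⟨g22, hg22, hg22m⟩ := hh1e c' rhp hrhp
  obtain ⟨m12, hm12, hm12m⟩ := ap2_spec (htEA (p1 w') (p1 (el (prodEq eqA eqB) c'))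
    (el eqA c'.1)) hg12 hg22
  obtain ⟨sm1, hsm1, hsm1m⟩ := hsEA (p1 w) (el eqA c.1) m1 hm1
  obtain ⟨t1, ht1, ht1m⟩ := ap2_spec (htEA (p1 w) (p1 w') (el eqA c'.1)) hf1 hm12
  obtain ⟨k1, hk1, hk1m⟩ := ap2_spec (htEA (el eqA c.1) (p1 w) (el eqA c'.1)) hsm1 ht1
  obtain ⟨hkS, hkU, hkE, hkI⟩ := elEq_dest hk1
  obtain ⟨ak, hak, hakm⟩ := (hkI c'.1).2 rhp.unpair.1 hrhp1
  obtain ⟨n2, hn2, hn2m⟩ := hh2 w (el (prodEq eqA eqB) c) qc hqc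
  obtain ⟨n2e, hn2e, hn2em⟩ := hh2e c rho hrho
  obtain ⟨m2, hm2, hm2m⟩ := ap2_spec (htEB (p2 w) (p2 (el (prodEq eqA eqB) c))
    (el eqB c.2)) hn2 hn2e
  obtain ⟨n22, hn22, hn22m⟩ := hh2 w' (el (prodEq eqA eqB) c') qc2 hqc2
  obtain ⟨n2e2, hn2e2, hn2e2m⟩ := hh2e c' rhp hrhp
  obtain ⟨m22, hm22, hm22m⟩ := ap2_spec (htEB (p2 w') (p2 (el (prodEq eqA eqB) c'))
    (el eqB c'.2)) hn22 hn2e2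
  obtain ⟨sm2, hsm2, hsm2m⟩ := hsEB (p2 w) (el eqB c.2) m2 hm2
  obtain ⟨t2, ht2, ht2m⟩ := ap2_spec (htEB (p2 w) (p2 w') (el eqB c'.2)) hf2 hm22
  obtain ⟨k2, hk2, hk2m⟩ := ap2_spec (htEB (el eqB c.2) (p2 w) (el eqB c'.2)) hsm2 ht2
  obtain ⟨hkS2, hkU2, hkE2, hkI2⟩ := elEq_dest hk2
  obtain ⟨bk, hbk, hbkm⟩ := (hkI2 c'.2).2 rhp.unpair.2 hrhp2
  obtain ⟨pc, hpc, hpcm⟩ := helP c c' (Nat.pair ak bk) (rAnd_pair_mem hak hbk)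
  obtain ⟨sq2, hsq2, hsq2m⟩ := hsEP w' (el (prodEq eqA eqB) c') qc2 hqc2
  obtain ⟨t3, ht3, ht3m⟩ := ap2_spec (htEP (el (prodEq eqA eqB) c)
    (el (prodEq eqA eqB) c') w') hpc hsq2
  obtain ⟨res, hres, hresm⟩ := ap2_spec (htEP w (el (prodEq eqA eqB) c) w') hqc ht3
  set e0 := Nat.pair (Nat.pair (Nat.pair (Nat.pair 0 qw) qw2) f1) f2 with he0
  set e1 := Nat.pair e0 rho with he1
  set e2 := Nat.pair e1 rhp with he2
  set e3 := Nat.pair e2 qc with he3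
  set e4 := Nat.pair e3 qc2 with he4
  set e5 := Nat.pair e4 g1 with he5
  set e6 := Nat.pair e5 g2 with he6
  set e7 := Nat.pair e6 m1 with he7
  set e8 := Nat.pair e7 g12 with he8
  set e9 := Nat.pair e8 g22 with he9
  set e10 := Nat.pair e9 m12 with he10
  set e11 := Nat.pair e10 sm1 with he11
  set e12 := Nat.pair e11 t1 with he12
  set e13 := Nat.pair e12 k1 with he13
  set e14 := Nat.pair e13 ak with he14
  set e15 := Nat.pair e14 n2 with he15
  set e16 := Nat.pair e15 n2e with he16
  set e17 := Nat.pair e16 m2 with he17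
  set e18 := Nat.pair e17 n22 with he18
  set e19 := Nat.pair e18 n2e2 with he19
  set e20 := Nat.pair e19 m22 with he20
  set e21 := Nat.pair e20 sm2 with he21
  set e22 := Nat.pair e21 t2 with he22
  set e23 := Nat.pair e22 k2 with he23
  set e24 := Nat.pair e23 bk with he24
  set e25 := Nat.pair e24 pc with he25
  set e26 := Nat.pair e25 sq2 with he26
  set e27 := Nat.pair e26 t3 with he27
  set e28 := Nat.pair e27 res with he28
  have hs1 : e1 ∈ (stp2 (fun e => e.unpair.1.unpair.1.unpair.1.unpair.2.unpair.2.unpair.1) (fun e => e.unpair.1.unpair.1.unpair.1.unpair.2.unpair.2.unpair.2.unpair.1) (fun e => e.unpair.1.unpair.1.unpair.1.unpair.2.unpair.2.unpair.2.unpair.1)) e0 :=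
    stp2_mem (by simpa only [he0, Nat.unpair_pair, cS, cU, cE, cF, cB] using hrhom)
  have hs2 : e2 ∈ (stp2 (fun e => e.unpair.1.unpair.1.unpair.1.unpair.2.unpair.2.unpair.1) (fun e => e.unpair.1.unpair.1.unpair.1.unpair.2.unpair.2.unpair.2.unpair.1) (fun e => e.unpair.1.unpair.1.unpair.1.unpair.2.unpair.2.unpair.2.unpair.1)) e1 :=
    stp2_mem (by simpa only [he1, he0, Nat.unpair_pair, cS, cU, cE, cF, cB] using hrhpm)
  have hs3 : e3 ∈ (stp2 (fun e => singP) (fun e => e.unpair.1.unpair.1.unpair.1.unpair.1.unpair.1.unpair.2) (fun e => e.unpair.1.unpair.1.unpair.1.unpair.1.unpair.1.unpair.2.unpair.2.unpair.2.unpair.1)) e2 :=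
    stp2_mem (by simpa only [he2, he1, he0, Nat.unpair_pair, cS, cU, cE, cF, cB] using hqcm)
  have hs4 : e4 ∈ (stp2 (fun e => singP) (fun e => e.unpair.1.unpair.1.unpair.1.unpair.1.unpair.1.unpair.2) (fun e => e.unpair.1.unpair.1.unpair.1.unpair.1.unpair.1.unpair.2.unpair.2.unpair.2.unpair.1)) e3 :=
    stp2_mem (by simpa only [he3, he2, he1, he0, Nat.unpair_pair, cS, cU, cE, cF, cB] using hqc2m)
  have hs5 : e5 ∈ (stp1 (fun e => h1) (fun e => e.unpair.1.unpair.2)) e4 :=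
    stp1_mem (by simpa only [he4, he3, he2, he1, he0, Nat.unpair_pair, cS, cU, cE, cF, cB] using hg1m)
  have hs6 : e6 ∈ (stp1 (fun e => h1e) (fun e => e.unpair.1.unpair.1.unpair.1.unpair.1.unpair.2)) e5 :=
    stp1_mem (by simpa only [he5, he4, he3, he2, he1, he0, Nat.unpair_pair, cS, cU, cE, cF, cB] using hg2m)
  have hs7 : e7 ∈ (stp2 (fun e => tEA) (fun e => e.unpair.1.unpair.2) (fun e => e.unpair.2)) e6 :=
    stp2_mem (by simpa only [he6, he5, he4, he3, he2, he1, he0, Nat.unpair_pair, cS, cU, cE, cF, cB] using hm1m)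
  have hs8 : e8 ∈ (stp1 (fun e => h1) (fun e => e.unpair.1.unpair.1.unpair.1.unpair.2)) e7 :=
    stp1_mem (by simpa only [he7, he6, he5, he4, he3, he2, he1, he0, Nat.unpair_pair, cS, cU, cE, cF, cB] using hg12m)
  have hs9 : e9 ∈ (stp1 (fun e => h1e) (fun e => e.unpair.1.unpair.1.unpair.1.unpair.1.unpair.1.unpair.1.unpair.2)) e8 :=
    stp1_mem (by simpa only [he8, he7, he6, he5, he4, he3, he2, he1, he0, Nat.unpair_pair, cS, cU, cE, cF, cB] using hg22m)
  have hs10 : e10 ∈ (stp2 (fun e => tEA) (fun e => e.unpair.1.unpair.2) (fun e => e.unpair.2)) e9 :=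
    stp2_mem (by simpa only [he9, he8, he7, he6, he5, he4, he3, he2, he1, he0, Nat.unpair_pair, cS, cU, cE, cF, cB] using hm12m)
  have hs11 : e11 ∈ (stp1 (fun e => sEA) (fun e => e.unpair.1.unpair.1.unpair.1.unpair.2)) e10 :=
    stp1_mem (by simpa only [he10, he9, he8, he7, he6, he5, he4, he3, he2, he1, he0, Nat.unpair_pair, cS, cU, cE, cF, cB] using hsm1m)
  have hs12 : e12 ∈ (stp2 (fun e => tEA) (fun e => e.unpair.1.unpair.1.unpair.1.unpair.1.unpair.1.unpair.1.unpair.1.unpair.1.unpair.1.unpair.1.unpair.1.unpair.1.unpair.2) (fun e => e.unpair.1.unpair.2)) e11 :=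
    stp2_mem (by simpa only [he11, he10, he9, he8, he7, he6, he5, he4, he3, he2, he1, he0, Nat.unpair_pair, cS, cU, cE, cF, cB] using ht1m)
  have hs13 : e13 ∈ (stp2 (fun e => tEA) (fun e => e.unpair.1.unpair.2) (fun e => e.unpair.2)) e12 :=
    stp2_mem (by simpa only [he12, he11, he10, he9, he8, he7, he6, he5, he4, he3, he2, he1, he0, Nat.unpair_pair, cS, cU, cE, cF, cB] using hk1m)
  have hs14 : e14 ∈ (stp1 (fun e => e.unpair.2.unpair.2.unpair.2.unpair.2.unpair.2) (fun e => e.unpair.1.unpair.1.unpair.1.unpair.1.unpair.1.unpair.1.unpair.1.unpair.1.unpair.1.unpair.1.unpair.1.unpair.2.unpair.1)) e13 :=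
    stp1_mem (by simpa only [he13, he12, he11, he10, he9, he8, he7, he6, he5, he4, he3, he2, he1, he0, Nat.unpair_pair, cS, cU, cE, cF, cB] using hakm)
  have hs15 : e15 ∈ (stp1 (fun e => h2) (fun e => e.unpair.1.unpair.1.unpair.1.unpair.1.unpair.1.unpair.1.unpair.1.unpair.1.unpair.1.unpair.1.unpair.1.unpair.2)) e14 :=
    stp1_mem (by simpa only [he14, he13, he12, he11, he10, he9, he8, he7, he6, he5, he4, he3, he2, he1, he0, Nat.unpair_pair, cS, cU, cE, cF, cB] using hn2m)
  have hs16 : e16 ∈ (stp1 (fun e => h2e) (fun e => e.unpair.1.unpair.1.unpair.1.unpair.1.unpair.1.unpair.1.unpair.1.unpair.1.unpair.1.unpair.1.unpair.1.unpair.1.unpair.1.unpair.1.unpair.2)) e15 :=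
    stp1_mem (by simpa only [he15, he14, he13, he12, he11, he10, he9, he8, he7, he6, he5, he4, he3, he2, he1, he0, Nat.unpair_pair, cS, cU, cE, cF, cB] using hn2em)
  have hs17 : e17 ∈ (stp2 (fun e => tEB) (fun e => e.unpair.1.unpair.2) (fun e => e.unpair.2)) e16 :=
    stp2_mem (by simpa only [he16, he15, he14, he13, he12, he11, he10, he9, he8, he7, he6, he5, he4, he3, he2, he1, he0, Nat.unpair_pair, cS, cU, cE, cF, cB] using hm2m)
  have hs18 : e18 ∈ (stp1 (fun e => h2) (fun e => e.unpair.1.unpair.1.unpair.1.unpair.1.unpair.1.unpair.1.unpair.1.unpair.1.unpair.1.unpair.1.unpair.1.unpair.1.unpair.1.unpair.2)) e17 :=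
    stp1_mem (by simpa only [he17, he16, he15, he14, he13, he12, he11, he10, he9, he8, he7, he6, he5, he4, he3, he2, he1, he0, Nat.unpair_pair, cS, cU, cE, cF, cB] using hn22m)
  have hs19 : e19 ∈ (stp1 (fun e => h2e) (fun e => e.unpair.1.unpair.1.unpair.1.unpair.1.unpair.1.unpair.1.unpair.1.unpair.1.unpair.1.unpair.1.unpair.1.unpair.1.unpair.1.unpair.1.unpair.1.unpair.1.unpair.2)) e18 :=
    stp1_mem (by simpa only [he18, he17, he16, he15, he14, he13, he12, he11, he10, he9, he8, he7, he6, he5, he4, he3, he2, he1, he0, Nat.unpair_pair, cS, cU, cE, cF, cB] using hn2e2m)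
  have hs20 : e20 ∈ (stp2 (fun e => tEB) (fun e => e.unpair.1.unpair.2) (fun e => e.unpair.2)) e19 :=
    stp2_mem (by simpa only [he19, he18, he17, he16, he15, he14, he13, he12, he11, he10, he9, he8, he7, he6, he5, he4, he3, he2, he1, he0, Nat.unpair_pair, cS, cU, cE, cF, cB] using hm22m)
  have hs21 : e21 ∈ (stp1 (fun e => sEB) (fun e => e.unpair.1.unpair.1.unpair.1.unpair.2)) e20 :=
    stp1_mem (by simpa only [he20, he19, he18, he17, he16, he15, he14, he13, he12, he11, he10, he9, he8, he7, he6, he5, he4, he3, he2, he1, he0, Nat.unpair_pair, cS, cU, cE, cF, cB] using hsm2m)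
  have hs22 : e22 ∈ (stp2 (fun e => tEB) (fun e => e.unpair.1.unpair.1.unpair.1.unpair.1.unpair.1.unpair.1.unpair.1.unpair.1.unpair.1.unpair.1.unpair.1.unpair.1.unpair.1.unpair.1.unpair.1.unpair.1.unpair.1.unpair.1.unpair.1.unpair.1.unpair.1.unpair.2) (fun e => e.unpair.1.unpair.2)) e21 :=
    stp2_mem (by simpa only [he21, he20, he19, he18, he17, he16, he15, he14, he13, he12, he11, he10, he9, he8, he7, he6, he5, he4, he3, he2, he1, he0, Nat.unpair_pair, cS, cU, cE, cF, cB] using ht2m)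
  have hs23 : e23 ∈ (stp2 (fun e => tEB) (fun e => e.unpair.1.unpair.2) (fun e => e.unpair.2)) e22 :=
    stp2_mem (by simpa only [he22, he21, he20, he19, he18, he17, he16, he15, he14, he13, he12, he11, he10, he9, he8, he7, he6, he5, he4, he3, he2, he1, he0, Nat.unpair_pair, cS, cU, cE, cF, cB] using hk2m)
  have hs24 : e24 ∈ (stp1 (fun e => e.unpair.2.unpair.2.unpair.2.unpair.2.unpair.2) (fun e => e.unpair.1.unpair.1.unpair.1.unpair.1.unpair.1.unpair.1.unpair.1.unpair.1.unpair.1.unpair.1.unpair.1.unpair.1.unpair.1.unpair.1.unpair.1.unpair.1.unpair.1.unpair.1.unpair.1.unpair.1.unpair.1.unpair.2.unpair.2)) e23 :=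
    stp1_mem (by simpa only [he23, he22, he21, he20, he19, he18, he17, he16, he15, he14, he13, he12, he11, he10, he9, he8, he7, he6, he5, he4, he3, he2, he1, he0, Nat.unpair_pair, cS, cU, cE, cF, cB] using hbkm)
  have hs25 : e25 ∈ (stp1 (fun e => elP) (fun e => Nat.pair (e.unpair.1.unpair.1.unpair.1.unpair.1.unpair.1.unpair.1.unpair.1.unpair.1.unpair.1.unpair.1.unpair.2) (e.unpair.2))) e24 :=
    stp1_mem (by simpa only [he24, he23, he22, he21, he20, he19, he18, he17, he16, he15, he14, he13, he12, he11, he10, he9, he8, he7, he6, he5, he4, he3, he2, he1, he0, Nat.unpair_pair, cS, cU, cE, cF, cB] using hpcm)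
  have hs26 : e26 ∈ (stp1 (fun e => sEP) (fun e => e.unpair.1.unpair.1.unpair.1.unpair.1.unpair.1.unpair.1.unpair.1.unpair.1.unpair.1.unpair.1.unpair.1.unpair.1.unpair.1.unpair.1.unpair.1.unpair.1.unpair.1.unpair.1.unpair.1.unpair.1.unpair.1.unpair.2)) e25 :=
    stp1_mem (by simpa only [he25, he24, he23, he22, he21, he20, he19, he18, he17, he16, he15, he14, he13, he12, he11, he10, he9, he8, he7, he6, he5, he4, he3, he2, he1, he0, Nat.unpair_pair, cS, cU, cE, cF, cB] using hsq2m)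
  have hs27 : e27 ∈ (stp2 (fun e => tEP) (fun e => e.unpair.1.unpair.2) (fun e => e.unpair.2)) e26 :=
    stp2_mem (by simpa only [he26, he25, he24, he23, he22, he21, he20, he19, he18, he17, he16, he15, he14, he13, he12, he11, he10, he9, he8, he7, he6, he5, he4, he3, he2, he1, he0, Nat.unpair_pair, cS, cU, cE, cF, cB] using ht3m)
  have hs28 : e28 ∈ (stp2 (fun e => tEP) (fun e => e.unpair.1.unpair.1.unpair.1.unpair.1.unpair.1.unpair.1.unpair.1.unpair.1.unpair.1.unpair.1.unpair.1.unpair.1.unpair.1.unpair.1.unpair.1.unpair.1.unpair.1.unpair.1.unpair.1.unpair.1.unpair.1.unpair.1.unpair.1.unpair.1.unpair.2) (fun e => e.unpair.2)) e27 :=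
    stp2_mem (by simpa only [he27, he26, he25, he24, he23, he22, he21, he20, he19, he18, he17, he16, he15, he14, he13, he12, he11, he10, he9, he8, he7, he6, he5, he4, he3, he2, he1, he0, Nat.unpair_pair, cS, cU, cE, cF, cB] using hresm)
  have hchain := (Part.mem_bind (Part.mem_bind (Part.mem_bind (Part.mem_bind (Part.mem_bind (Part.mem_bind (Part.mem_bind (Part.mem_bind (Part.mem_bind (Part.mem_bind (Part.mem_bind (Part.mem_bind (Part.mem_bind (Part.mem_bind (Part.mem_bind (Part.mem_bind (Part.mem_bind (Part.mem_bind (Part.mem_bind (Part.mem_bind (Part.mem_bind (Part.mem_bind (Part.mem_bind (Part.mem_bind (Part.mem_bind (Part.mem_bind (Part.mem_bind hs1 hs2) hs3) hs4) hs5) hs6) hs7) hs8) hs9) hs10) hs11) hs12) hs13) hs14) hs15) hs16) hs17) hs18) hs19) hs20) hs21) hs22) hs23) hs24) hs25) hs26) hs27) hs28)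
  have hfin := Part.mem_map (fun e : ℕ => e.unpair.2) hchain
  exact ⟨res, hres, by
    simpa only [hrun, he28, he27, he26, he25, he24, he23, he22, he21, he20, he19, he18,
      he17, he16, he15, he14, he13, he12, he11, he10, he9, he8, he7, he6, he5, he4,
      he3, he2, he1, he0, Nat.unpair_pair] using hfin⟩

theorem product_beta_eta {A B : Type}
    (eqA : A → A → Set ℕ) (eqB : B → B → Set ℕ)
    (hA : IsEff eqA) (hB : IsEff eqB)
    (p1 : (A × B → Set ℕ) → (A → Set ℕ))
    (p2 : (A × B → Set ℕ) → (B → Set ℕ))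
    (cons : (A → Set ℕ) → (B → Set ℕ) → (A × B → Set ℕ))
    (hp1 : (rAll fun w : A × B → Set ℕ => rAll fun w' : A × B → Set ℕ =>
      rImp (elEq (prodEq eqA eqB) w w') (elEq eqA (p1 w) (p1 w'))).Nonempty)
    (hp2 : (rAll fun w : A × B → Set ℕ => rAll fun w' : A × B → Set ℕ =>
      rImp (elEq (prodEq eqA eqB) w w') (elEq eqB (p2 w) (p2 w'))).Nonempty)
    (hcons : (rAll fun u : A → Set ℕ => rAll fun u' : A → Set ℕ =>
      rAll fun v : B → Set ℕ => rAll fun v' : B → Set ℕ =>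
        rImp (elEq eqA u u') (rImp (elEq eqB v v')
          (elEq (prodEq eqA eqB) (cons u v) (cons u' v')))).Nonempty)
    (hp1ext : (rAll fun c : A × B => rImp (prodEq eqA eqB c c)
      (elEq eqA (p1 (el (prodEq eqA eqB) c)) (el eqA c.1))).Nonempty)
    (hp2ext : (rAll fun c : A × B => rImp (prodEq eqA eqB c c)
      (elEq eqB (p2 (el (prodEq eqA eqB) c)) (el eqB c.2))).Nonempty)
    (hconsext : (rAll fun a : A => rAll fun b : B =>
      rImp (eqA a a) (rImp (eqB b b)
        (elEq (prodEq eqA eqB) (cons (el eqA a) (el eqB b))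
          (el (prodEq eqA eqB) (a, b))))).Nonempty) :
    ((rAll fun u : A → Set ℕ => rAll fun v : B → Set ℕ =>
        rImp (elEq eqA u u) (rImp (elEq eqB v v)
          (elEq eqA (p1 (cons u v)) u))).Nonempty
      ∧
      (rAll fun u : A → Set ℕ => rAll fun v : B → Set ℕ =>
        rImp (elEq eqA u u) (rImp (elEq eqB v v)
          (elEq eqB (p2 (cons u v)) v))).Nonempty
      ∧
      (rAll fun w : A × B → Set ℕ => rAll fun w' : A × B → Set ℕ =>
        rImp (elEq (prodEq eqA eqB) w w) (rImp (elEq (prodEq eqA eqB) w' w')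
          (rImp (elEq eqA (p1 w) (p1 w')) (rImp (elEq eqB (p2 w) (p2 w'))
            (elEq (prodEq eqA eqB) w w'))))).Nonempty) := by
  classical
  obtain ⟨sA, hsA0⟩ := hA.1
  obtain ⟨tA, htA0⟩ := hA.2
  obtain ⟨sB, hsB0⟩ := hB.1
  obtain ⟨tB, htB0⟩ := hB.2
  have hsA : ∀ x y, sA ∈ rImp (eqA x y) (eqA y x) :=
    fun x y => mem_rAll_iff.1 (mem_rAll_iff.1 hsA0 x) y
  have htA : ∀ x y z, tA ∈ rImp (eqA x y) (rImp (eqA y z) (eqA x z)) :=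
    fun x y z => mem_rAll_iff.1 (mem_rAll_iff.1 (mem_rAll_iff.1 htA0 x) y) z
  have hsB : ∀ x y, sB ∈ rImp (eqB x y) (eqB y x) :=
    fun x y => mem_rAll_iff.1 (mem_rAll_iff.1 hsB0 x) y
  have htB : ∀ x y z, tB ∈ rImp (eqB x y) (rImp (eqB y z) (eqB x z)) :=
    fun x y z => mem_rAll_iff.1 (mem_rAll_iff.1 (mem_rAll_iff.1 htB0 x) y) z
  obtain ⟨h1, hh10⟩ := hp1
  have hh1 : ∀ w w' : A × B → Set ℕ, h1 ∈ rImp (elEq (prodEq eqA eqB) w w')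
      (elEq eqA (p1 w) (p1 w')) :=
    fun w w' => mem_rAll_iff.1 (mem_rAll_iff.1 hh10 w) w'
  obtain ⟨h2, hh20⟩ := hp2
  have hh2 : ∀ w w' : A × B → Set ℕ, h2 ∈ rImp (elEq (prodEq eqA eqB) w w')
      (elEq eqB (p2 w) (p2 w')) :=
    fun w w' => mem_rAll_iff.1 (mem_rAll_iff.1 hh20 w) w'
  obtain ⟨hc, hhc0⟩ := hcons
  have hhc : ∀ (u u' : A → Set ℕ) (v v' : B → Set ℕ), hc ∈ rImp (elEq eqA u u')
      (rImp (elEq eqB v v') (elEq (prodEq eqA eqB) (cons u v) (cons u' v'))) :=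
    fun u u' v v' => mem_rAll_iff.1 (mem_rAll_iff.1 (mem_rAll_iff.1
      (mem_rAll_iff.1 hhc0 u) u') v) v'
  obtain ⟨h1e, hh1e0⟩ := hp1ext
  have hh1e : ∀ c : A × B, h1e ∈ rImp (prodEq eqA eqB c c)
      (elEq eqA (p1 (el (prodEq eqA eqB) c)) (el eqA c.1)) :=
    fun c => mem_rAll_iff.1 hh1e0 c
  obtain ⟨h2e, hh2e0⟩ := hp2ext
  have hh2e : ∀ c : A × B, h2e ∈ rImp (prodEq eqA eqB c c)
      (elEq eqB (p2 (el (prodEq eqA eqB) c)) (el eqB c.2)) :=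
    fun c => mem_rAll_iff.1 hh2e0 c
  obtain ⟨hce, hhce0⟩ := hconsext
  have hhce : ∀ (a : A) (b : B), hce ∈ rImp (eqA a a) (rImp (eqB b b)
      (elEq (prodEq eqA eqB) (cons (el eqA a) (el eqB b))
        (el (prodEq eqA eqB) (a, b)))) :=
    fun a b => mem_rAll_iff.1 (mem_rAll_iff.1 hhce0 a) b
  obtain ⟨tEA, htEA⟩ := elEq_trans eqA
  obtain ⟨tEB, htEB⟩ := elEq_trans eqB
  obtain ⟨tEP, htEP⟩ := elEq_trans (prodEq eqA eqB)
  obtain ⟨sEA, hsEA⟩ := elEq_symm eqA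
  obtain ⟨sEB, hsEB⟩ := elEq_symm eqB
  obtain ⟨sEP, hsEP⟩ := elEq_symm (prodEq eqA eqB)
  obtain ⟨singA, hsingA⟩ := el_sing eqA
  obtain ⟨singB, hsingB⟩ := el_sing eqB
  obtain ⟨singP, hsingP⟩ := el_sing (prodEq eqA eqB)
  obtain ⟨sP, hsP⟩ := prod_symm eqA eqB hsA hsB
  obtain ⟨tP, htP⟩ := prod_trans eqA eqB htA htB
  obtain ⟨elP, helP⟩ := el_cong (prodEq eqA eqB) hsP htP
  refine ⟨?_, ?_, ?_⟩
  · obtain ⟨e, he⟩ := beta_p1 hhc hh1 hh1e hhce htEA htEP hsEA hsingA hsingB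
    exact ⟨e, mem_rAll_iff.2 fun u => mem_rAll_iff.2 fun v => he u v⟩
  · obtain ⟨e, he⟩ := beta_p2 hhc hh2 hh2e hhce htEB htEP hsEB hsingA hsingB
    exact ⟨e, mem_rAll_iff.2 fun u => mem_rAll_iff.2 fun v => he u v⟩
  · obtain ⟨e, he⟩ := eta_pair hh1 hh1e hh2 hh2e htEA htEB htEP hsEA hsEB hsEP
      hsingP helP
    exact ⟨e, mem_rAll_iff.2 fun w => mem_rAll_iff.2 fun w' => he w w'⟩
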